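/- arXiv:1406.4852 — 5 statements merged into one kernel-verified Lean document; each statement's English description precedes it below -/
import Mathlib

section
/- Let (M, (W_j), (S_i^j)) be an exact-repair regenerating code with parameters (n,k,d) and secondary parameters (B,α,β), where n ≥ d+1. Let 0 ≤ q ≤ k and let {1,…,d+1} = V' ∪ V ∪ U be a partition with |V'| = q, |V| = k−q and |U| = d+1−k. Writing S_V = (S_i^j : i,j ∈ V, i > j), one has H(M | W_{V'}, S_V, S_U^V) = 0; in particular the joint variable (W_{V'}, S_V, S_U^V) determines M. -/
open Finset

/-- Shannon entropy (base 2) of a finitely-valued random variable `X` on a finite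
probability space with mass function `P`. -/
noncomputable def entH {Ω S : Type*} [Fintype Ω] (P : Ω → ℝ) (X : Ω → S) : ℝ :=
  letI := Classical.decEq S
  ∑ s ∈ Finset.univ.image X,
    -((∑ ω ∈ Finset.univ.filter (fun ω => X ω = s), P ω) *
       Real.logb 2 (∑ ω ∈ Finset.univ.filter (fun ω => X ω = s), P ω))

/-- Conditional entropy `H(X | Y) = H(X, Y) - H(Y)`. -/
noncomputable def condH {Ω S T : Type*} [Fintype Ω] (P : Ω → ℝ) (X : Ω → S) (Y : Ω → T) : ℝ :=
  entH P (fun ω => (X ω, Y ω)) - entH P Y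

/-- The joint random variable `W_J = (W_j : j ∈ J)`. -/
def jointW {Ω : Type*} {n : ℕ} {σW : Fin n → Type*} (W : ∀ j, Ω → σW j)
    (J : Finset (Fin n)) : Ω → ∀ j : J, σW j.1 :=
  fun ω j => W j.1 ω

/-- The joint random variable `(S_i^j : (i,j) ∈ E)` for a set `E` of pairs. -/
def jointS {Ω : Type*} {n : ℕ} {σS : Fin n → Fin n → Type*} (S : ∀ i j, Ω → σS i j)
    (E : Finset (Fin n × Fin n)) : Ω → ∀ e : E, σS e.1.1 e.1.2 :=
  fun ω e => S e.1.1 e.1.2 ω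

/-- The joint random variable `S_I^j = (S_i^j : i ∈ I)`. -/
def jointSto {Ω : Type*} {n : ℕ} {σS : Fin n → Fin n → Type*} (S : ∀ i j, Ω → σS i j)
    (I : Finset (Fin n)) (j : Fin n) : Ω → ∀ i : I, σS i.1 j :=
  fun ω i => S i.1 j ω

/-- An exact-repair regenerating code with parameters `(n,k,d)` (with `1 ≤ k ≤ d ≤ n-1`)
and secondary parameters `(B,α,β)`: the file `M`, the stored data `W j` on server `j`
(servers indexed by `Fin n`, server `j` of the paper being index `j-1`), and the helper
information `S i j` sent from server `i` to repair server `j`. -/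
structure IsRegenCode {Ω : Type*} [Fintype Ω] (n k d : ℕ) (B α β : ℝ) (P : Ω → ℝ)
    {σM : Type*} {σW : Fin n → Type*} {σS : Fin n → Fin n → Type*}
    (M : Ω → σM) (W : ∀ j, Ω → σW j) (S : ∀ i j, Ω → σS i j) : Prop where
  prob_nonneg : ∀ ω, 0 ≤ P ω
  prob_sum : ∑ ω, P ω = 1
  hk : 1 ≤ k
  hkd : k ≤ d
  hdn : d + 1 ≤ n
  hB : 0 ≤ B
  hα : 0 ≤ α
  hβ : 0 ≤ β
  hMB : entH P M = B
  hWα : ∀ j, entH P (W j) = α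
  hWM : ∀ j, condH P (W j) M = 0
  hMW : ∀ J : Finset (Fin n), k ≤ J.card → condH P M (jointW W J) = 0
  hSβ : ∀ i j, i ≠ j → entH P (S i j) = β
  hSW : ∀ i j, i ≠ j → condH P (S i j) (W i) = 0
  hWS : ∀ (j : Fin n) (I : Finset (Fin n)), d ≤ I.card → j ∉ I →
    condH P (W j) (jointSto S I j) = 0

/-- `B_q = qα + ((k-q)(k-q-1)/2)β + (d+1-k)(k-q)β`. -/
noncomputable def Bfun (k d q : ℕ) (α β : ℝ) : ℝ :=
  (q : ℝ) * α + (((k - q) * (k - q - 1) : ℕ) : ℝ) / 2 * β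
    + (((d + 1 - k) * (k - q) : ℕ) : ℝ) * β


namespace RegenAux

/-- `phi t = -(t * log₂ t)`, the summand of Shannon entropy. -/
noncomputable def phi (t : ℝ) : ℝ := -(t * Real.logb 2 t)

/-- The probability mass of the value `s` of the random variable `X`. -/
noncomputable def mass {Ω S : Type*} [Fintype Ω] (P : Ω → ℝ) (X : Ω → S) (s : S) : ℝ :=
  letI := Classical.decEq S
  ∑ ω ∈ Finset.univ.filter (fun ω => X ω = s), P ω

lemma entH_eq_sum {Ω S : Type*} [Fintype Ω] (P : Ω → ℝ) (X : Ω → S) :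
    entH P X = ∑ s ∈ @Finset.image _ _ (Classical.decEq S) X Finset.univ,
      phi (mass P X s) := rfl

/-- `X` is determined by `Y` on the support of `P`. -/
def DetBy {Ω S T : Type*} (P : Ω → ℝ) (X : Ω → S) (Y : Ω → T) : Prop :=
  ∀ ⦃ω ω' : Ω⦄, P ω ≠ 0 → P ω' ≠ 0 → Y ω = Y ω' → X ω = X ω'

lemma DetBy.trans {Ω S T R : Type*} {P : Ω → ℝ} {X : Ω → S} {Y : Ω → T} {Z : Ω → R}
    (h1 : DetBy P X Y) (h2 : DetBy P Y Z) : DetBy P X Z :=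
  fun _ _ hω hω' hZ => h1 hω hω' (h2 hω hω' hZ)

lemma phi_zero : phi 0 = 0 := by simp [phi]

section Mass
variable {Ω S : Type*} [Fintype Ω] {P : Ω → ℝ} {X : Ω → S}

lemma mass_nonneg (hP : ∀ ω, 0 ≤ P ω) (s : S) : 0 ≤ mass P X s :=
  Finset.sum_nonneg fun ω _ => hP ω

lemma le_mass (hP : ∀ ω, 0 ≤ P ω) (ω : Ω) : P ω ≤ mass P X (X ω) := by
  letI := Classical.decEq S
  simp only [mass]
  exact Finset.single_le_sum (fun ω _ => hP ω) (by simp)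

lemma exists_of_mass_ne_zero {s : S} (h : mass P X s ≠ 0) : ∃ ω, P ω ≠ 0 ∧ X ω = s := by
  letI := Classical.decEq S
  by_contra hc
  push_neg at hc
  apply h
  simp only [mass]
  refine Finset.sum_eq_zero fun ω hω => ?_
  have hXs : X ω = s := (Finset.mem_filter.1 hω).2
  by_contra hPω
  exact hc ω hPω hXs

end Mass

lemma phi_add_lt {a b : ℝ} (ha : 0 < a) (hb : 0 < b) : phi (a + b) < phi a + phi b := by
  have l1 : Real.logb 2 a < Real.logb 2 (a + b) := Real.logb_lt_logb one_lt_two ha (by linarith)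
  have l2 : Real.logb 2 b < Real.logb 2 (a + b) := Real.logb_lt_logb one_lt_two hb (by linarith)
  have m1 : a * Real.logb 2 a < a * Real.logb 2 (a + b) := by nlinarith
  have m2 : b * Real.logb 2 b < b * Real.logb 2 (a + b) := by nlinarith
  simp only [phi]
  nlinarith

lemma phi_add_le {a b : ℝ} (ha : 0 ≤ a) (hb : 0 ≤ b) : phi (a + b) ≤ phi a + phi b := by
  rcases ha.eq_or_lt with h | h
  · simp [← h, phi_zero]
  rcases hb.eq_or_lt with h' | h'
  · simp [← h', phi_zero]
  · exact (phi_add_lt h h').le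

lemma phi_sum_le {ι : Type*} {t : Finset ι} {m : ι → ℝ} (hm : ∀ i ∈ t, 0 ≤ m i) :
    phi (∑ i ∈ t, m i) ≤ ∑ i ∈ t, phi (m i) := by
  classical
  induction t using Finset.cons_induction with
  | empty => simp [phi_zero]
  | cons a t ha ih =>
    rw [Finset.sum_cons, Finset.sum_cons]
    have h1 : phi (m a + ∑ i ∈ t, m i) ≤ phi (m a) + phi (∑ i ∈ t, m i) :=
      phi_add_le (hm a (Finset.mem_cons_self a t))
        (Finset.sum_nonneg fun i hi => hm i (Finset.mem_cons_of_mem hi))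
    have h2 := ih (fun i hi => hm i (Finset.mem_cons_of_mem hi))
    linarith

lemma sum_phi_eq_case {ι : Type*} {t : Finset ι} {m : ι → ℝ} (hm : ∀ i ∈ t, 0 ≤ m i)
    (heq : ∑ i ∈ t, phi (m i) ≤ phi (∑ i ∈ t, m i))
    {i j : ι} (hi : i ∈ t) (hj : j ∈ t) (hij : i ≠ j)
    (hmi : 0 < m i) (hmj : 0 < m j) : False := by
  classical
  have hj' : j ∈ t.erase i := Finset.mem_erase.2 ⟨hij.symm, hj⟩
  set s := (t.erase i).erase j with hs
  have hsub : ∀ x ∈ s, x ∈ t := fun x hx =>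
    Finset.mem_of_mem_erase (Finset.mem_of_mem_erase hx)
  have e1 : ∑ x ∈ t, m x = m i + m j + ∑ x ∈ s, m x := by
    rw [← Finset.add_sum_erase _ _ hi, ← Finset.add_sum_erase _ _ hj', hs]; ring
  have e2 : ∑ x ∈ t, phi (m x) = phi (m i) + phi (m j) + ∑ x ∈ s, phi (m x) := by
    rw [← Finset.add_sum_erase _ _ hi, ← Finset.add_sum_erase _ _ hj', hs]; ring
  have hsnn : 0 ≤ ∑ x ∈ s, m x := Finset.sum_nonneg fun x hx => hm x (hsub x hx)
  have h3 : phi (∑ x ∈ s, m x) ≤ ∑ x ∈ s, phi (m x) :=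
    phi_sum_le fun x hx => hm x (hsub x hx)
  have h4 : phi (m i + m j + ∑ x ∈ s, m x) ≤ phi (m i + m j) + phi (∑ x ∈ s, m x) :=
    phi_add_le (by linarith) hsnn
  have h5 : phi (m i + m j) < phi (m i) + phi (m j) := phi_add_lt hmi hmj
  rw [e1, e2] at heq
  linarith

end RegenAux

namespace RegenAux

lemma condH_zero_iff {Ω S T : Type*} [Fintype Ω] {P : Ω → ℝ} (hP : ∀ ω, 0 ≤ P ω)
    (X : Ω → S) (Y : Ω → T) : condH P X Y = 0 ↔ DetBy P X Y := by
  letI : DecidableEq S := Classical.decEq S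
  letI : DecidableEq T := Classical.decEq T
  letI : DecidableEq (S × T) := Classical.decEq (S × T)
  set XY : Ω → S × T := fun ω => (X ω, Y ω) with hXYdef
  set IY : Finset T := @Finset.image _ _ (Classical.decEq T) Y Finset.univ with hIY
  set IXY : Finset (S × T) := @Finset.image _ _ (Classical.decEq (S × T)) XY Finset.univ
    with hIXY
  set Tf : T → Finset (S × T) := fun y => IXY.filter (fun p => p.2 = y) with hTf
  -- decomposition of entH P XY
  have hmaps : ∀ p ∈ IXY, p.2 ∈ IY := by
    intro p hp
    rw [hIXY, Finset.mem_image] at hp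
    obtain ⟨ω, _, rfl⟩ := hp
    exact Finset.mem_image_of_mem _ (Finset.mem_univ ω)
  have hE1 : entH P XY = ∑ y ∈ IY, ∑ p ∈ Tf y, phi (mass P XY p) := by
    rw [entH_eq_sum]
    exact (Finset.sum_fiberwise_of_maps_to hmaps _).symm
  have hE3 : entH P Y = ∑ y ∈ IY, phi (mass P Y y) := entH_eq_sum P Y
  -- fiber decomposition of the mass of Y
  have hE2 : ∀ y : T, mass P Y y = ∑ p ∈ Tf y, mass P XY p := by
    intro y
    have hm : ∀ ω ∈ Finset.univ.filter (fun ω => Y ω = y), XY ω ∈ Tf y := by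
      intro ω hω
      have hYω : Y ω = y := (Finset.mem_filter.1 hω).2
      exact Finset.mem_filter.2 ⟨Finset.mem_image_of_mem _ (Finset.mem_univ ω), hYω⟩
    have key := Finset.sum_fiberwise_of_maps_to hm P
    have hinner : ∀ p ∈ Tf y,
        ∑ ω ∈ (Finset.univ.filter (fun ω => Y ω = y)).filter (fun ω => XY ω = p), P ω
          = mass P XY p := by
      intro p hp
      have hpy : p.2 = y := (Finset.mem_filter.1 hp).2
      simp only [mass]
      refine Finset.sum_congr ?_ (fun _ _ => rfl)
      ext ω
      simp only [Finset.mem_filter, Finset.mem_univ, true_and]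
      constructor
      · exact fun h => h.2
      · intro h
        refine ⟨?_, h⟩
        have : (XY ω).2 = p.2 := by rw [h]
        simpa [hXYdef, hpy] using this
    calc mass P Y y = ∑ ω ∈ Finset.univ.filter (fun ω => Y ω = y), P ω := rfl
      _ = ∑ p ∈ Tf y, ∑ ω ∈ (Finset.univ.filter (fun ω => Y ω = y)).filter
            (fun ω => XY ω = p), P ω := key.symm
      _ = ∑ p ∈ Tf y, mass P XY p := Finset.sum_congr rfl hinner
  have hcond : condH P X Y
      = ∑ y ∈ IY, ((∑ p ∈ Tf y, phi (mass P XY p)) - phi (mass P Y y)) := by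
    have : condH P X Y = entH P XY - entH P Y := rfl
    rw [this, hE1, hE3, ← Finset.sum_sub_distrib]
  have hF0 : ∀ y ∈ IY, 0 ≤ (∑ p ∈ Tf y, phi (mass P XY p)) - phi (mass P Y y) := by
    intro y _
    have h := phi_sum_le (t := Tf y) (m := fun p => mass P XY p)
      (fun p _ => mass_nonneg hP p)
    rw [← hE2 y] at h
    linarith
  constructor
  · -- condH = 0 → DetBy
    intro h ω ω' hω hω' hYeq
    rw [hcond] at h
    have hall := (Finset.sum_eq_zero_iff_of_nonneg hF0).1 h
    by_contra hXne
    have hyI : Y ω ∈ IY := Finset.mem_image_of_mem _ (Finset.mem_univ ω)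
    have h0 := hall (Y ω) hyI
    have hle : ∑ p ∈ Tf (Y ω), phi (mass P XY p)
        ≤ phi (∑ p ∈ Tf (Y ω), mass P XY p) := by
      rw [← hE2]; linarith
    have hmem : XY ω ∈ Tf (Y ω) :=
      Finset.mem_filter.2 ⟨Finset.mem_image_of_mem _ (Finset.mem_univ ω), rfl⟩
    have hmem' : XY ω' ∈ Tf (Y ω) :=
      Finset.mem_filter.2 ⟨Finset.mem_image_of_mem _ (Finset.mem_univ ω'), hYeq.symm⟩
    have hne : XY ω ≠ XY ω' := fun hh => hXne (congrArg Prod.fst hh)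
    have hpos : 0 < mass P XY (XY ω) :=
      lt_of_lt_of_le ((hP ω).lt_of_ne (Ne.symm hω)) (le_mass hP ω)
    have hpos' : 0 < mass P XY (XY ω') :=
      lt_of_lt_of_le ((hP ω').lt_of_ne (Ne.symm hω')) (le_mass hP ω')
    exact sum_phi_eq_case (fun p _ => mass_nonneg hP p) hle hmem hmem' hne hpos hpos'
  · -- DetBy → condH = 0
    intro hdet
    rw [hcond]
    refine Finset.sum_eq_zero fun y hy => ?_
    by_cases hex : ∃ p ∈ Tf y, mass P XY p ≠ 0
    · obtain ⟨p₀, hp₀, hm₀⟩ := hex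
      have huniq : ∀ p ∈ Tf y, p ≠ p₀ → mass P XY p = 0 := by
        intro p hp hne
        by_contra hm
        obtain ⟨ω, hω, hXYω⟩ := exists_of_mass_ne_zero hm
        obtain ⟨ω', hω', hXYω'⟩ := exists_of_mass_ne_zero hm₀
        have hpy : p.2 = y := (Finset.mem_filter.1 hp).2
        have hpy₀ : p₀.2 = y := (Finset.mem_filter.1 hp₀).2
        have hY : Y ω = Y ω' := by
          have h1 : (XY ω).2 = p.2 := by rw [hXYω]
          have h2 : (XY ω').2 = p₀.2 := by rw [hXYω']
          simp only [hXYdef] at h1 h2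
          rw [h1, h2, hpy, hpy₀]
        have hX : X ω = X ω' := hdet hω hω' hY
        apply hne
        rw [← hXYω, ← hXYω']
        simp only [hXYdef]
        exact Prod.ext hX hY
      have e1 : ∑ p ∈ Tf y, mass P XY p = mass P XY p₀ :=
        Finset.sum_eq_single_of_mem p₀ hp₀ huniq
      have e2 : ∑ p ∈ Tf y, phi (mass P XY p) = phi (mass P XY p₀) :=
        Finset.sum_eq_single_of_mem p₀ hp₀ (fun p hp hne => by
          rw [huniq p hp hne, phi_zero])
      rw [e2, hE2 y, e1, sub_self]
    · push_neg at hex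
      have e1 : ∑ p ∈ Tf y, mass P XY p = 0 := Finset.sum_eq_zero hex
      have e2 : ∑ p ∈ Tf y, phi (mass P XY p) = 0 :=
        Finset.sum_eq_zero fun p hp => by rw [hex p hp, phi_zero]
      rw [e2, hE2 y, e1, phi_zero, sub_self]

end RegenAux

open RegenAux in
/-- for a partition `{1,…,d+1} = V' ∪ V ∪ U` with `|V'| = q`, `|V| = k-q`,
`|U| = d+1-k`, the joint variable `(W_{V'}, S_V, S_U^V)` determines `M`. -/
theorem stmt_1 {Ω : Type*} [Fintype Ω] {n k d : ℕ} {B α β : ℝ} {P : Ω → ℝ}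
    {σM : Type*} {σW : Fin n → Type*} {σS : Fin n → Fin n → Type*}
    {M : Ω → σM} {W : ∀ j, Ω → σW j} {S : ∀ i j, Ω → σS i j}
    (hcode : IsRegenCode n k d B α β P M W S)
    (q : ℕ) (hq : q ≤ k)
    (V' V U : Finset (Fin n))
    (hd1 : Disjoint V' V) (hd2 : Disjoint V' U) (hd3 : Disjoint V U)
    (hunion : V' ∪ V ∪ U = Finset.univ.filter (fun x : Fin n => (x : ℕ) < d + 1))
    (hV' : V'.card = q) (hV : V.card = k - q) (hU : U.card = d + 1 - k) :
    condH P M (fun ω =>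
      (jointW W V' ω,
       jointS S ((V ×ˢ V).filter (fun e => e.2 < e.1)) ω,
       jointS S (U ×ˢ V) ω)) = 0 := by
  classical
  have hP := hcode.prob_nonneg
  set Z : Ω → _ := (fun ω =>
      (jointW W V' ω,
       jointS S ((V ×ˢ V).filter (fun e => e.2 < e.1)) ω,
       jointS S (U ×ˢ V) ω)) with hZdef
  rw [condH_zero_iff hP]
  -- components of an equality Z ω = Z ω'
  have hZ1 : ∀ {ω ω'}, Z ω = Z ω' → ∀ j ∈ V', W j ω = W j ω' := by
    intro ω ω' h j hj
    exact congrFun (congrArg Prod.fst h) ⟨j, hj⟩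
  have hZ2 : ∀ {ω ω'}, Z ω = Z ω' → ∀ i ∈ V, ∀ j ∈ V, j < i → S i j ω = S i j ω' := by
    intro ω ω' h i hi j hj hij
    have h2 := congrArg Prod.fst (congrArg Prod.snd h)
    exact congrFun h2 ⟨(i, j), Finset.mem_filter.2 ⟨Finset.mem_product.2 ⟨hi, hj⟩, hij⟩⟩
  have hZ3 : ∀ {ω ω'}, Z ω = Z ω' → ∀ i ∈ U, ∀ j ∈ V, S i j ω = S i j ω' := by
    intro ω ω' h i hi j hj
    have h3 := congrArg Prod.snd (congrArg Prod.snd h)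
    exact congrFun h3 ⟨(i, j), Finset.mem_product.2 ⟨hi, hj⟩⟩
  -- facts extracted from the code
  have hSWdet : ∀ i j, i ≠ j → DetBy P (S i j) (W i) := fun i j hij =>
    (condH_zero_iff hP _ _).1 (hcode.hSW i j hij)
  -- the big set
  set Tset : Finset (Fin n) := V' ∪ V ∪ U with hTset
  have hdisj12 : Disjoint (V' ∪ V) U := by
    rw [Finset.disjoint_union_left]; exact ⟨hd2, hd3⟩
  have hcardVV : (V' ∪ V).card = k := by
    rw [Finset.card_union_of_disjoint hd1, hV', hV]; omega
  have hcardT : Tset.card = d + 1 := by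
    rw [hTset, Finset.card_union_of_disjoint hdisj12, hcardVV, hU]
    have := hcode.hkd; omega
  -- every node of V is determined by Z
  have hWdet : ∀ m : ℕ, ∀ v ∈ V, (v : ℕ) = m → DetBy P (W v) Z := by
    intro m
    induction m using Nat.strong_induction_on with
    | _ m ih =>
      intro v hv hvm
      have hvT : v ∈ Tset := by
        rw [hTset]; exact Finset.mem_union_left _ (Finset.mem_union_right _ hv)
      set I : Finset (Fin n) := Tset.erase v with hI
      have hIcard : I.card = d := by
        rw [hI, Finset.card_erase_of_mem hvT, hcardT]
        omega
      have hvI : v ∉ I := Finset.notMem_erase v Tset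
      have h1 : DetBy P (W v) (jointSto S I v) :=
        (condH_zero_iff hP _ _).1 (hcode.hWS v I (le_of_eq hIcard.symm) hvI)
      have h2 : DetBy P (jointSto S I v) Z := by
        intro ω ω' hω hω' hZeq
        refine funext fun x => ?_
        obtain ⟨i, hiI⟩ := x
        show S i v ω = S i v ω'
        have hiv : i ≠ v := (Finset.mem_erase.1 hiI).1
        have hiT : i ∈ Tset := Finset.mem_of_mem_erase hiI
        rw [hTset] at hiT
        rcases Finset.mem_union.1 hiT with hiT' | hiU
        · rcases Finset.mem_union.1 hiT' with hiV' | hiV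
          · -- i ∈ V' : W i is a component of Z
            exact hSWdet i v hiv hω hω' (hZ1 hZeq i hiV')
          · -- i ∈ V
            rcases lt_trichotomy i v with hlt | heq | hgt
            · -- i < v : induction hypothesis
              have hIH : DetBy P (W i) Z := ih (i : ℕ) (hvm ▸ hlt) i hiV rfl
              exact hSWdet i v hiv hω hω' (hIH hω hω' hZeq)
            · exact absurd heq hiv
            · -- v < i : S i v is a component of Z
              exact hZ2 hZeq i hiV v hv hgt
        · -- i ∈ U : S i v is a component of Z
          exact hZ3 hZeq i hiU v hv
      exact h1.trans h2
  -- M is determined by W over V' ∪ V, which is determined by Z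
  have hMJ : DetBy P M (jointW W (V' ∪ V)) :=
    (condH_zero_iff hP _ _).1 (hcode.hMW (V' ∪ V) (le_of_eq hcardVV.symm))
  have hJZ : DetBy P (jointW W (V' ∪ V)) Z := by
    intro ω ω' hω hω' hZeq
    refine funext fun x => ?_
    obtain ⟨j, hj⟩ := x
    show W j ω = W j ω'
    rcases Finset.mem_union.1 hj with hj' | hjV
    · exact hZ1 hZeq j hj'
    · exact hWdet (j : ℕ) j hjV rfl hω hω' hZeq
  exact hMJ.trans hJZ
end

section
/- Let M be a random variable and let A_1,…,A_n and a_1,…,a_n be (joint) random variables on the same probability space such that H(M | A_i, a_i) = 0 for every 1 ≤ i ≤ n, and H(a_j | A_i) = 0 for all 1 ≤ i < j ≤ n. Then n·H(M) ≤ Σ_{i=1}^n H(A_i) + H(a_1, a_2, …, a_n). -/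
open Finset

section EntLemmas

variable {Ω : Type*} [Fintype Ω] {S T U : Type*}

/-- mass of a value -/
noncomputable def qm (P : Ω → ℝ) (X : Ω → S) (x : S) : ℝ :=
  letI := Classical.decEq S
  ∑ ω ∈ Finset.univ.filter (fun ω => X ω = x), P ω

lemma qm_eq (P : Ω → ℝ) (X : Ω → S) (x : S) [DecidableEq S] :
    qm P X x = ∑ ω ∈ Finset.univ.filter (fun ω => X ω = x), P ω := by
  unfold qm; congr!

lemma qm_nonneg {P : Ω → ℝ} (hP0 : ∀ ω, 0 ≤ P ω) (X : Ω → S) (x : S) :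
    0 ≤ qm P X x := by
  classical
  rw [qm_eq]; exact Finset.sum_nonneg fun ω _ => hP0 ω

lemma qm_le_one {P : Ω → ℝ} (hP0 : ∀ ω, 0 ≤ P ω) (hP1 : ∑ ω, P ω = 1) (X : Ω → S) (x : S) :
    qm P X x ≤ 1 := by
  classical
  rw [qm_eq, ← hP1]
  exact Finset.sum_le_sum_of_subset_of_nonneg (Finset.filter_subset _ _) fun ω _ _ => hP0 ω

lemma le_qm_self {P : Ω → ℝ} (hP0 : ∀ ω, 0 ≤ P ω) (X : Ω → S) (ω : Ω) :
    P ω ≤ qm P X (X ω) := by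
  classical
  rw [qm_eq]
  exact Finset.single_le_sum (fun ω' _ => hP0 ω') (by simp)

lemma qm_pos {P : Ω → ℝ} (hP0 : ∀ ω, 0 ≤ P ω) (X : Ω → S) {ω : Ω} (hω : P ω ≠ 0) :
    0 < qm P X (X ω) :=
  lt_of_lt_of_le ((hP0 ω).lt_of_ne (Ne.symm hω)) (le_qm_self hP0 X ω)

lemma entH_eq (P : Ω → ℝ) (X : Ω → S) :
    entH P X = ∑ ω, -(P ω * Real.logb 2 (qm P X (X ω))) := by
  classical
  have h1 : entH P X
      = ∑ s ∈ Finset.univ.image X, -((qm P X s) * Real.logb 2 (qm P X s)) := by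
    unfold entH; congr! <;> rw [qm_eq]
  rw [h1, ← Finset.sum_fiberwise_of_maps_to
    (g := X) (t := Finset.univ.image X)
    (fun ω _ => Finset.mem_image_of_mem X (Finset.mem_univ ω))
    (fun ω => -(P ω * Real.logb 2 (qm P X (X ω))))]
  refine Finset.sum_congr rfl fun s _ => ?_
  rw [Finset.sum_congr rfl (fun ω hω => by
    rw [(Finset.mem_filter.1 hω).2] :
      ∀ ω ∈ Finset.univ.filter (fun ω => X ω = s),
        -(P ω * Real.logb 2 (qm P X (X ω))) = -(P ω * Real.logb 2 (qm P X s)))]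
  rw [qm_eq, Finset.sum_neg_distrib, ← Finset.sum_mul]

end EntLemmas

section EntLemmas2

variable {Ω : Type*} [Fintype Ω] {S T U : Type*}

lemma qm_mono {P : Ω → ℝ} (hP0 : ∀ ω, 0 ≤ P ω) {X : Ω → S} {Z : Ω → U} (ω : Ω)
    (h : ∀ ω', P ω' ≠ 0 → X ω' = X ω → Z ω' = Z ω) :
    qm P X (X ω) ≤ qm P Z (Z ω) := by
  classical
  rw [qm_eq, qm_eq, ← Finset.sum_filter_ne_zero (Finset.univ.filter (fun ω' => X ω' = X ω))]
  refine Finset.sum_le_sum_of_subset_of_nonneg ?_ (fun ω' _ _ => hP0 ω')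
  intro ω' hω'
  simp only [Finset.mem_filter, Finset.mem_univ, true_and] at hω' ⊢
  exact h ω' hω'.2 hω'.1

lemma entH_mono {P : Ω → ℝ} (hP0 : ∀ ω, 0 ≤ P ω) {X : Ω → S} {Z : Ω → U}
    (h : ∀ ω ω', P ω ≠ 0 → P ω' ≠ 0 → X ω = X ω' → Z ω = Z ω') :
    entH P Z ≤ entH P X := by
  rw [entH_eq, entH_eq]
  refine Finset.sum_le_sum fun ω _ => ?_
  by_cases hω : P ω = 0
  · simp [hω]
  · have hpos : 0 < P ω := (hP0 ω).lt_of_ne (Ne.symm hω)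
    have h1 : qm P X (X ω) ≤ qm P Z (Z ω) :=
      qm_mono hP0 ω (fun ω' hω' hX => h ω' ω hω' hω hX)
    have h2 : 0 < qm P X (X ω) := qm_pos hP0 X hω
    have h3 : Real.logb 2 (qm P X (X ω)) ≤ Real.logb 2 (qm P Z (Z ω)) :=
      Real.logb_le_logb_of_le (by norm_num) h2 h1
    nlinarith

lemma entH_nonneg {P : Ω → ℝ} (hP0 : ∀ ω, 0 ≤ P ω) (hP1 : ∑ ω, P ω = 1) (X : Ω → S) :
    0 ≤ entH P X := by
  rw [entH_eq]
  refine Finset.sum_nonneg fun ω _ => ?_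
  have h1 : 0 ≤ qm P X (X ω) := qm_nonneg hP0 X _
  have h2 : qm P X (X ω) ≤ 1 := qm_le_one hP0 hP1 X _
  have h3 : Real.logb 2 (qm P X (X ω)) ≤ 0 := Real.logb_nonpos (by norm_num) h1 h2
  nlinarith [hP0 ω]

lemma entH_pair_eq_of_det {P : Ω → ℝ} (hP0 : ∀ ω, 0 ≤ P ω) {X : Ω → S} {Y : Ω → T}
    (h : ∀ ω ω', P ω ≠ 0 → P ω' ≠ 0 → X ω = X ω' → Y ω = Y ω') :
    entH P (fun ω => (Y ω, X ω)) = entH P X := by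
  refine le_antisymm
    (entH_mono hP0 (fun ω ω' h1 h2 hX => by rw [h ω ω' h1 h2 hX, hX]))
    (entH_mono hP0 (fun ω ω' _ _ hX => congrArg Prod.snd hX))

lemma det_of_condH_zero {P : Ω → ℝ} (hP0 : ∀ ω, 0 ≤ P ω) {Y : Ω → T} {X : Ω → S}
    (h : condH P Y X = 0) :
    ∀ ω ω', P ω ≠ 0 → P ω' ≠ 0 → X ω = X ω' → Y ω = Y ω' := by
  classical
  intro ω ω' hω hω' hX
  by_contra hY
  have key : entH P X < entH P (fun ω => (Y ω, X ω)) := by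
    rw [entH_eq, entH_eq]
    refine Finset.sum_lt_sum (fun ω'' _ => ?_) ⟨ω, Finset.mem_univ ω, ?_⟩
    · by_cases h0 : P ω'' = 0
      · simp [h0]
      · have hpos : 0 < P ω'' := (hP0 ω'').lt_of_ne (Ne.symm h0)
        have h1 : qm P (fun ω => (Y ω, X ω)) (Y ω'', X ω'') ≤ qm P X (X ω'') := by
          rw [qm_eq, qm_eq]
          refine Finset.sum_le_sum_of_subset_of_nonneg ?_ (fun ω' _ _ => hP0 ω')
          intro ω''' h'''
          simp only [Finset.mem_filter, Finset.mem_univ, true_and, Prod.mk.injEq] at h''' ⊢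
          exact h'''.2
        have h2 : 0 < qm P (fun ω => (Y ω, X ω)) (Y ω'', X ω'') :=
          qm_pos hP0 (fun ω => (Y ω, X ω)) h0
        have h3 := Real.logb_le_logb_of_le (b := 2) (by norm_num) h2 h1
        nlinarith
    · have hpos : 0 < P ω := (hP0 ω).lt_of_ne (Ne.symm hω)
      have hpos' : 0 < P ω' := (hP0 ω').lt_of_ne (Ne.symm hω')
      have h1 : qm P (fun ω => (Y ω, X ω)) (Y ω, X ω) + P ω' ≤ qm P X (X ω) := by
        rw [qm_eq, qm_eq]
        have hnot : ω' ∉ Finset.univ.filter (fun ω'' => (Y ω'', X ω'') = (Y ω, X ω)) := by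
          simp only [Finset.mem_filter, Finset.mem_univ, true_and, Prod.mk.injEq, not_and]
          exact fun hc => absurd hc.symm hY
        calc (∑ ω'' ∈ Finset.univ.filter (fun ω'' => (Y ω'', X ω'') = (Y ω, X ω)), P ω'') + P ω'
            = ∑ ω'' ∈ insert ω' (Finset.univ.filter (fun ω'' => (Y ω'', X ω'') = (Y ω, X ω))), P ω'' := by
              rw [Finset.sum_insert hnot]; ring
          _ ≤ ∑ ω'' ∈ Finset.univ.filter (fun ω'' => X ω'' = X ω), P ω'' := by
              refine Finset.sum_le_sum_of_subset_of_nonneg ?_ (fun ω'' _ _ => hP0 ω'')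
              intro ω'' h''
              simp only [Finset.mem_insert, Finset.mem_filter, Finset.mem_univ, true_and,
                Prod.mk.injEq] at h'' ⊢
              rcases h'' with rfl | h''
              · exact hX.symm
              · exact h''.2
      have hlt : qm P (fun ω => (Y ω, X ω)) (Y ω, X ω) < qm P X (X ω) := by linarith
      have h2 : 0 < qm P (fun ω => (Y ω, X ω)) (Y ω, X ω) :=
        qm_pos hP0 (fun ω => (Y ω, X ω)) hω
      have h3 := Real.logb_lt_logb (b := 2) (by norm_num) h2 hlt
      nlinarith
  have : condH P Y X ≠ 0 := by
    unfold condH; intro hc; linarith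
  exact this h

end EntLemmas2

section Submod

variable {Ω : Type*} [Fintype Ω] {S T U : Type*}

lemma qm_sum_image (P : Ω → ℝ) (Y : Ω → T) [DecidableEq T] :
    ∑ y ∈ Finset.univ.image Y, qm P Y y = ∑ ω, P ω := by
  simp only [qm_eq]
  exact Finset.sum_fiberwise_of_maps_to
    (fun ω _ => Finset.mem_image_of_mem Y (Finset.mem_univ ω)) P

lemma qm_pair_fst (P : Ω → ℝ) (X : Ω → S) (Y : Ω → T) [DecidableEq S] [DecidableEq T] (y : T) :
    ∑ x ∈ Finset.univ.image X, qm P (fun ω => (X ω, Y ω)) (x, y) = qm P Y y := by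
  classical
  simp only [qm_eq]
  rw [← Finset.sum_fiberwise_of_maps_to (s := Finset.univ.filter (fun ω => Y ω = y))
    (g := X) (t := Finset.univ.image X)
    (fun ω _ => Finset.mem_image_of_mem X (Finset.mem_univ ω)) P]
  refine Finset.sum_congr rfl fun x _ => ?_
  refine Finset.sum_congr ?_ fun _ _ => rfl
  ext ω
  simp only [Finset.mem_filter, Finset.mem_univ, true_and, Prod.mk.injEq]
  exact ⟨fun h => ⟨h.2, h.1⟩, fun h => ⟨h.2, h.1⟩⟩

lemma qm_pair_snd (P : Ω → ℝ) (Y : Ω → T) (Z : Ω → U) [DecidableEq T] [DecidableEq U] (y : T) :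
    ∑ z ∈ Finset.univ.image Z, qm P (fun ω => (Y ω, Z ω)) (y, z) = qm P Y y := by
  classical
  simp only [qm_eq]
  rw [← Finset.sum_fiberwise_of_maps_to (s := Finset.univ.filter (fun ω => Y ω = y))
    (g := Z) (t := Finset.univ.image Z)
    (fun ω _ => Finset.mem_image_of_mem Z (Finset.mem_univ ω)) P]
  refine Finset.sum_congr rfl fun z _ => ?_
  refine Finset.sum_congr ?_ fun _ _ => rfl
  ext ω
  simp only [Finset.mem_filter, Finset.mem_univ, true_and, Prod.mk.injEq]

lemma qm_le_qm_of_sub {P : Ω → ℝ} (hP0 : ∀ ω, 0 ≤ P ω) {X : Ω → S} {Z : Ω → U}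
    [DecidableEq S] [DecidableEq U] {x : S} {z : U}
    (h : ∀ ω, X ω = x → Z ω = z) : qm P X x ≤ qm P Z z := by
  rw [qm_eq, qm_eq]
  refine Finset.sum_le_sum_of_subset_of_nonneg ?_ (fun ω _ _ => hP0 ω)
  intro ω hω
  simp only [Finset.mem_filter, Finset.mem_univ, true_and] at hω ⊢
  exact h ω hω

end Submod
section Submod2

variable {Ω : Type*} [Fintype Ω] {S T U : Type*}

lemma entH_submod {P : Ω → ℝ} (hP0 : ∀ ω, 0 ≤ P ω) (hP1 : ∑ ω, P ω = 1)
    (X : Ω → S) (Y : Ω → T) (Z : Ω → U) :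
    entH P (fun ω => (X ω, Y ω, Z ω)) + entH P Y
      ≤ entH P (fun ω => (X ω, Y ω)) + entH P (fun ω => (Y ω, Z ω)) := by
  classical
  set W : Ω → S × T × U := fun ω => (X ω, Y ω, Z ω) with hW
  set r : Ω → ℝ := fun ω =>
    qm P (fun ω => (X ω, Y ω)) (X ω, Y ω) * qm P (fun ω => (Y ω, Z ω)) (Y ω, Z ω)
      / (qm P W (W ω) * qm P Y (Y ω)) with hr
  -- Step 1: ∑ P r ≤ 1
  set G : S × T × U → ℝ := fun s =>
    qm P (fun ω => (X ω, Y ω)) (s.1, s.2.1) * qm P (fun ω => (Y ω, Z ω)) (s.2.1, s.2.2)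
      / qm P Y s.2.1 with hG
  have hGnn : ∀ s, 0 ≤ G s := fun s =>
    div_nonneg (mul_nonneg (qm_nonneg hP0 _ _) (qm_nonneg hP0 _ _)) (qm_nonneg hP0 _ _)
  have hC2 : ∑ ω, P ω * r ω ≤ 1 := by
    have hgroup : ∑ ω, P ω * r ω ≤ ∑ s ∈ Finset.univ.image W, G s := by
      rw [← Finset.sum_fiberwise_of_maps_to (g := W) (t := Finset.univ.image W)
        (fun ω _ => Finset.mem_image_of_mem W (Finset.mem_univ ω)) (fun ω => P ω * r ω)]
      refine Finset.sum_le_sum fun s _ => ?_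
      have hconst : ∀ ω ∈ Finset.univ.filter (fun ω => W ω = s), P ω * r ω
          = P ω * (qm P (fun ω => (X ω, Y ω)) (s.1, s.2.1)
              * qm P (fun ω => (Y ω, Z ω)) (s.2.1, s.2.2) / (qm P W s * qm P Y s.2.1)) := by
        intro ω hω
        have hWs : W ω = s := (Finset.mem_filter.1 hω).2
        have h1 : X ω = s.1 := congrArg Prod.fst hWs
        have h2 : Y ω = s.2.1 := congrArg (fun p => p.2.1) hWs
        have h3 : Z ω = s.2.2 := congrArg (fun p => p.2.2) hWs
        simp only [hr]
        rw [h1, h2, h3, hWs]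
      rw [Finset.sum_congr rfl hconst, ← Finset.sum_mul]
      have hq : ∑ ω ∈ Finset.univ.filter (fun ω => W ω = s), P ω = qm P W s :=
        (qm_eq P W s).symm
      rw [hq]
      by_cases h0 : qm P W s = 0
      · rw [h0, zero_mul]; exact hGnn s
      · have hle : qm P W s ≤ qm P Y s.2.1 :=
          qm_le_qm_of_sub hP0 (fun ω h => congrArg (fun p => p.2.1) h)
        have hpos : 0 < qm P W s := (qm_nonneg hP0 W s).lt_of_ne (Ne.symm h0)
        have hY0 : qm P Y s.2.1 ≠ 0 := ne_of_gt (lt_of_lt_of_le hpos hle)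
        apply le_of_eq
        simp only [hG]
        field_simp
    have himg : ∑ s ∈ Finset.univ.image W, G s
        ≤ ∑ s ∈ (Finset.univ.image X) ×ˢ ((Finset.univ.image Y) ×ˢ (Finset.univ.image Z)), G s := by
      refine Finset.sum_le_sum_of_subset_of_nonneg ?_ (fun s _ _ => hGnn s)
      intro s hs
      obtain ⟨ω, _, rfl⟩ := Finset.mem_image.1 hs
      simp only [Finset.mem_product]
      exact ⟨Finset.mem_image_of_mem X (Finset.mem_univ ω),
        Finset.mem_image_of_mem Y (Finset.mem_univ ω),
        Finset.mem_image_of_mem Z (Finset.mem_univ ω)⟩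
    have hprod : ∑ s ∈ (Finset.univ.image X) ×ˢ ((Finset.univ.image Y) ×ˢ (Finset.univ.image Z)),
        G s ≤ 1 := by
      rw [Finset.sum_product, Finset.sum_comm, Finset.sum_product]
      have hyz : ∀ y ∈ Finset.univ.image Y,
          ∑ z ∈ Finset.univ.image Z, (∑ x ∈ Finset.univ.image X, G (x, (y, z)))
            ≤ qm P Y y := by
        intro y _
        have hxs : ∀ z, (∑ x ∈ Finset.univ.image X, G (x, (y, z)))
            = qm P Y y * (qm P (fun ω => (Y ω, Z ω)) (y, z) / qm P Y y) := by
          intro z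
          have hone : ∀ x, G (x, (y, z)) = qm P (fun ω => (X ω, Y ω)) (x, y)
              * (qm P (fun ω => (Y ω, Z ω)) (y, z) / qm P Y y) := by
            intro x; simp only [hG]; exact mul_div_assoc _ _ _
          simp only [hone]
          rw [← Finset.sum_mul, qm_pair_fst]
        simp only [hxs]
        by_cases h0 : qm P Y y = 0
        · simp [h0]
        · have hone2 : ∀ z, qm P Y y * (qm P (fun ω => (Y ω, Z ω)) (y, z) / qm P Y y)
              = qm P (fun ω => (Y ω, Z ω)) (y, z) := by
            intro z; rw [mul_comm, div_mul_cancel₀ _ h0]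
          simp only [hone2]
          exact le_of_eq (qm_pair_snd P Y Z y)
      calc ∑ y ∈ Finset.univ.image Y, ∑ z ∈ Finset.univ.image Z,
            (∑ x ∈ Finset.univ.image X, G (x, (y, z)))
          ≤ ∑ y ∈ Finset.univ.image Y, qm P Y y := Finset.sum_le_sum hyz
        _ = 1 := by rw [qm_sum_image P Y, hP1]
    exact le_trans (le_trans hgroup himg) hprod
  -- Step 2: Gibbs
  have hlog2 : (0:ℝ) < Real.log 2 := Real.log_pos one_lt_two
  have hGibbs : ∑ ω, P ω * Real.logb 2 (r ω) ≤ 0 := by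
    have hterm : ∀ ω : Ω, P ω * Real.logb 2 (r ω) ≤ (P ω * r ω - P ω) / Real.log 2 := by
      intro ω
      by_cases h0 : P ω = 0
      · simp [h0]
      · have hpos : 0 < P ω := (hP0 ω).lt_of_ne (Ne.symm h0)
        have hr1 : 0 < qm P (fun ω => (X ω, Y ω)) (X ω, Y ω) := qm_pos hP0 _ h0
        have hr2 : 0 < qm P (fun ω => (Y ω, Z ω)) (Y ω, Z ω) := qm_pos hP0 _ h0
        have hr3 : 0 < qm P W (W ω) := qm_pos hP0 _ h0
        have hr4 : 0 < qm P Y (Y ω) := qm_pos hP0 _ h0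
        have hrpos : 0 < r ω := by
          simp only [hr]; exact div_pos (mul_pos hr1 hr2) (mul_pos hr3 hr4)
        have hlb : Real.log (r ω) ≤ r ω - 1 := Real.log_le_sub_one_of_pos hrpos
        simp only [Real.logb]
        rw [show P ω * (Real.log (r ω) / Real.log 2) = P ω * Real.log (r ω) / Real.log 2 by ring,
          div_le_div_iff_of_pos_right hlog2]
        nlinarith
    calc ∑ ω, P ω * Real.logb 2 (r ω)
        ≤ ∑ ω, (P ω * r ω - P ω) / Real.log 2 := Finset.sum_le_sum (fun ω _ => hterm ω)
      _ = ((∑ ω, P ω * r ω) - 1) / Real.log 2 := by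
          rw [← Finset.sum_div, Finset.sum_sub_distrib, hP1]
      _ ≤ 0 := div_nonpos_of_nonpos_of_nonneg (by linarith) (le_of_lt hlog2)
  -- Step 3: per-ω log identity and summation
  have hterm2 : ∀ ω : Ω,
      -(P ω * Real.logb 2 (qm P W (W ω))) + -(P ω * Real.logb 2 (qm P Y (Y ω)))
        ≤ -(P ω * Real.logb 2 (qm P (fun ω => (X ω, Y ω)) (X ω, Y ω)))
          + -(P ω * Real.logb 2 (qm P (fun ω => (Y ω, Z ω)) (Y ω, Z ω)))
          + P ω * Real.logb 2 (r ω) := by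
    intro ω
    by_cases h0 : P ω = 0
    · simp [h0]
    · have hr1 : 0 < qm P (fun ω => (X ω, Y ω)) (X ω, Y ω) := qm_pos hP0 _ h0
      have hr2 : 0 < qm P (fun ω => (Y ω, Z ω)) (Y ω, Z ω) := qm_pos hP0 _ h0
      have hr3 : 0 < qm P W (W ω) := qm_pos hP0 _ h0
      have hr4 : 0 < qm P Y (Y ω) := qm_pos hP0 _ h0
      have he : Real.logb 2 (r ω) =
          Real.logb 2 (qm P (fun ω => (X ω, Y ω)) (X ω, Y ω))
            + Real.logb 2 (qm P (fun ω => (Y ω, Z ω)) (Y ω, Z ω))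
            - (Real.logb 2 (qm P W (W ω)) + Real.logb 2 (qm P Y (Y ω))) := by
        simp only [hr]
        rw [Real.logb_div (by positivity) (by positivity),
          Real.logb_mul hr1.ne' hr2.ne', Real.logb_mul hr3.ne' hr4.ne']
      apply le_of_eq
      rw [he]; ring
  simp only [entH_eq]
  calc ∑ ω, -(P ω * Real.logb 2 (qm P W (W ω)))
        + ∑ ω, -(P ω * Real.logb 2 (qm P Y (Y ω)))
      = ∑ ω, (-(P ω * Real.logb 2 (qm P W (W ω)))
          + -(P ω * Real.logb 2 (qm P Y (Y ω)))) := Finset.sum_add_distrib.symm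
    _ ≤ ∑ ω, (-(P ω * Real.logb 2 (qm P (fun ω => (X ω, Y ω)) (X ω, Y ω)))
          + -(P ω * Real.logb 2 (qm P (fun ω => (Y ω, Z ω)) (Y ω, Z ω)))
          + P ω * Real.logb 2 (r ω)) := Finset.sum_le_sum (fun ω _ => hterm2 ω)
    _ = (∑ ω, -(P ω * Real.logb 2 (qm P (fun ω => (X ω, Y ω)) (X ω, Y ω))))
          + (∑ ω, -(P ω * Real.logb 2 (qm P (fun ω => (Y ω, Z ω)) (Y ω, Z ω))))
          + ∑ ω, P ω * Real.logb 2 (r ω) := by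
        rw [Finset.sum_add_distrib, Finset.sum_add_distrib]
    _ ≤ _ := by linarith [hGibbs]

end Submod2
section Main

/-- joint of `a j` for `j ≥ i` -/
def uu {Ω : Type*} {n : ℕ} {σa : Fin n → Type*} (a : ∀ i, Ω → σa i) (i : ℕ) :
    Ω → ∀ j : {j : Fin n // i ≤ j.val}, σa j.1 := fun ω j => a j.1 ω

/-- chain bound `n·H(M) ≤ Σ H(A_i) + H(a_1,…,a_n)`. -/
theorem stmt_2 {Ω : Type*} [Fintype Ω] (P : Ω → ℝ)
    (hP0 : ∀ ω, 0 ≤ P ω) (hP1 : ∑ ω, P ω = 1)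
    {n : ℕ} {σM : Type*} {σA σa : Fin n → Type*}
    (M : Ω → σM) (A : ∀ i, Ω → σA i) (a : ∀ i, Ω → σa i)
    (h1 : ∀ i, condH P M (fun ω => (A i ω, a i ω)) = 0)
    (h2 : ∀ i j : Fin n, i < j → condH P (a j) (A i) = 0) :
    (n : ℝ) * entH P M ≤ ∑ i, entH P (A i) + entH P (fun ω (i : Fin n) => a i ω) := by
  have key : ∀ i : Fin n,
      entH P M ≤ entH P (A i) + (entH P (uu a i.1) - entH P (uu a (i.1 + 1))) := by
    intro i
    have detM : ∀ ω ω', P ω ≠ 0 → P ω' ≠ 0 →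
        (A i ω, a i ω) = (A i ω', a i ω') → M ω = M ω' :=
      det_of_condH_zero hP0 (h1 i)
    have detT : ∀ ω ω', P ω ≠ 0 → P ω' ≠ 0 → A i ω = A i ω' →
        uu a (i.1 + 1) ω = uu a (i.1 + 1) ω' := by
      intro ω ω' hω hω' hA
      funext j
      have hij : i < j.1 := by
        have := j.2
        exact Fin.lt_def.mpr (by omega)
      exact det_of_condH_zero hP0 (h2 i j.1 hij) ω ω' hω hω' hA
    -- Step 1: H(M) ≤ H(A i, a i)
    have s1 : entH P M ≤ entH P (fun ω => (A i ω, a i ω)) := by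
      calc entH P M ≤ entH P (fun ω => (M ω, (A i ω, a i ω))) :=
            entH_mono hP0 (fun ω ω' _ _ hX => congrArg Prod.fst hX)
        _ = entH P (fun ω => (A i ω, a i ω)) := entH_pair_eq_of_det hP0 detM
    -- Step 2
    have s2 : entH P (fun ω => (A i ω, a i ω))
        ≤ entH P (fun ω => (a i ω, uu a (i.1 + 1) ω, A i ω)) := by
      refine entH_mono hP0 (fun ω ω' _ _ hX => ?_)
      have e1 : a i ω = a i ω' := congrArg (fun p => p.1) hX
      have e2 : A i ω = A i ω' := congrArg (fun p => p.2.2) hX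
      rw [e1, e2]
    -- Step 3: submodularity
    have s3 := entH_submod hP0 hP1 (a i) (uu a (i.1 + 1)) (A i)
    -- Step 4
    have s4 : entH P (fun ω => (uu a (i.1 + 1) ω, A i ω)) = entH P (A i) :=
      entH_pair_eq_of_det hP0 detT
    -- Step 5
    have s5 : entH P (fun ω => (a i ω, uu a (i.1 + 1) ω)) = entH P (uu a i.1) := by
      apply le_antisymm
      · refine entH_mono hP0 (fun ω ω' _ _ hX => ?_)
        have e1 : a i ω = a i ω' := by
          have := congrFun hX (⟨i, le_refl i.1⟩ : {j : Fin n // i.1 ≤ j.val})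
          exact this
        have e2 : uu a (i.1 + 1) ω = uu a (i.1 + 1) ω' := by
          funext j
          exact congrFun hX ⟨j.1, by have := j.2; omega⟩
        rw [e1, e2]
      · refine entH_mono hP0 (fun ω ω' _ _ hX => ?_)
        funext j
        by_cases hji : i.1 + 1 ≤ j.1.val
        · exact congrFun (congrArg Prod.snd hX) ⟨j.1, hji⟩
        · have hj : j.1 = i := Fin.ext (by have := j.2; omega)
          have e1 : a i ω = a i ω' := congrArg Prod.fst hX
          have : (⟨i, le_refl i.1⟩ : {j : Fin n // i.1 ≤ j.val}) = j := by
            exact Subtype.ext hj.symm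
          rw [← this]
          exact e1
    linarith
  -- sum up
  have sumtel : ∑ i : Fin n, (entH P (uu a i.1) - entH P (uu a (i.1 + 1)))
      = entH P (uu a 0) - entH P (uu a n) := by
    rw [Fin.sum_univ_eq_sum_range (fun i => entH P (uu a i) - entH P (uu a (i + 1))) n]
    exact Finset.sum_range_sub' (fun i => entH P (uu a i)) n
  have e0 : entH P (uu a 0) = entH P (fun ω (i : Fin n) => a i ω) := by
    apply le_antisymm
    · refine entH_mono hP0 (fun ω ω' _ _ hX => ?_)
      funext j
      exact congrFun hX j.1
    · refine entH_mono hP0 (fun ω ω' _ _ hX => ?_)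
      funext j
      exact congrFun hX ⟨j, Nat.zero_le _⟩
  have en : 0 ≤ entH P (uu a n) := entH_nonneg hP0 hP1 _
  calc (n : ℝ) * entH P M = ∑ _i : Fin n, entH P M := by
        rw [Finset.sum_const, Finset.card_univ, Fintype.card_fin, nsmul_eq_mul]
    _ ≤ ∑ i : Fin n, (entH P (A i) + (entH P (uu a i.1) - entH P (uu a (i.1 + 1)))) :=
        Finset.sum_le_sum (fun i _ => key i)
    _ = ∑ i, entH P (A i) + (entH P (uu a 0) - entH P (uu a n)) := by
        rw [Finset.sum_add_distrib, sumtel]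
    _ ≤ ∑ i, entH P (A i) + entH P (fun ω (i : Fin n) => a i ω) := by
        rw [← e0]; linarith
end Main
end

section
/- Let (M, (W_j), (S_i^j)) be an exact-repair regenerating code with parameters (n,k,d) and secondary parameters (B,α,β), where n ≥ d+1. Let L ⊆ R ⊆ {1,…,n} and M' ⊆ {1,…,n} with R ∩ M' = ∅, and set ℓ = |L| ≥ 1, m = |M'| ≥ 1, r = |R|, with r + m ≤ k. Then H(W_R | W_{M'}) + (ℓ−1)·H(W_R) + H(S_{M'}^L) ≤ ℓ(rα + β) + ℓ((d−r)β − α). -/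
open Finset

set_option linter.unusedSectionVars false
namespace RegenAux

variable {Ω : Type*} [Fintype Ω]

/-- Mass of the `X`-fiber containing `ω`. -/
noncomputable def pm {S : Type*} (P : Ω → ℝ) (X : Ω → S) (ω : Ω) : ℝ :=
  letI := Classical.decEq S
  ∑ ω' ∈ Finset.univ.filter (fun ω' => X ω' = X ω), P ω'

variable {P : Ω → ℝ}

lemma entH_eq {S : Type*} (P : Ω → ℝ) (X : Ω → S) :
    entH P X = ∑ ω, -(P ω * Real.logb 2 (pm P X ω)) := by
  unfold entH pm
  letI := Classical.decEq S
  refine Finset.sum_image' _ (fun c _ => ?_)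
  have h1 : ∀ x ∈ Finset.univ.filter (fun ω' => X ω' = X c),
      -(P x * Real.logb 2 (∑ ω' ∈ Finset.univ.filter (fun ω' => X ω' = X x), P ω'))
      = -(P x * Real.logb 2 (∑ ω' ∈ Finset.univ.filter (fun ω' => X ω' = X c), P ω')) := by
    intro x hx
    rw [Finset.mem_filter] at hx
    rw [hx.2]
  rw [Finset.sum_congr rfl h1, Finset.sum_neg_distrib, ← Finset.sum_mul]

lemma pm_nonneg {S : Type*} (hP0 : ∀ ω, 0 ≤ P ω) (X : Ω → S) (ω : Ω) : 0 ≤ pm P X ω := by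
  unfold pm; exact Finset.sum_nonneg fun ω' _ => hP0 ω'

lemma le_pm {S : Type*} (hP0 : ∀ ω, 0 ≤ P ω) (X : Ω → S) (ω : Ω) : P ω ≤ pm P X ω := by
  classical
  unfold pm
  refine Finset.single_le_sum (fun ω' _ => hP0 ω') ?_
  simp

lemma pm_le_total {S : Type*} (hP0 : ∀ ω, 0 ≤ P ω) (X : Ω → S) (ω : Ω) :
    pm P X ω ≤ ∑ ω', P ω' := by
  classical
  unfold pm
  exact Finset.sum_le_sum_of_subset_of_nonneg (Finset.filter_subset _ _)
    (fun ω' _ _ => hP0 ω')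

/-- If fibers of `X` refine fibers of `Y`, the fiber mass grows. -/
lemma pm_mono {S T : Type*} (hP0 : ∀ ω, 0 ≤ P ω) {X : Ω → S} {Y : Ω → T}
    (h : ∀ ω₁ ω₂, X ω₁ = X ω₂ → Y ω₁ = Y ω₂) (ω : Ω) : pm P X ω ≤ pm P Y ω := by
  classical
  unfold pm
  refine Finset.sum_le_sum_of_subset_of_nonneg ?_ (fun ω' _ _ => hP0 ω')
  intro x hx
  rw [Finset.mem_filter] at hx ⊢
  exact ⟨Finset.mem_univ x, h _ _ hx.2⟩

lemma pm_congr {S : Type*} {X : Ω → S} {ω₁ ω₂ : Ω} (h : X ω₁ = X ω₂) :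
    pm P X ω₁ = pm P X ω₂ := by
  classical
  unfold pm
  congr 1
  ext x
  simp only [Finset.mem_filter, Finset.mem_univ, true_and]
  rw [h]

/-- Entropy decreases under coarsening of fibers. -/
lemma entH_le_of_fiber {S T : Type*} (hP0 : ∀ ω, 0 ≤ P ω) {X : Ω → S} {Y : Ω → T}
    (h : ∀ ω₁ ω₂, X ω₁ = X ω₂ → Y ω₁ = Y ω₂) : entH P Y ≤ entH P X := by
  rw [entH_eq P X, entH_eq P Y]
  refine Finset.sum_le_sum fun ω _ => ?_
  rcases eq_or_lt_of_le (hP0 ω) with h0 | h0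
  · simp [← h0]
  · have h1 : 0 < pm P X ω := lt_of_lt_of_le h0 (le_pm hP0 X ω)
    have h2 : pm P X ω ≤ pm P Y ω := pm_mono hP0 h ω
    have := Real.logb_le_logb_of_le (by norm_num : (1:ℝ) < 2) h1 h2
    nlinarith

lemma entH_congr_fiber {S T : Type*} (hP0 : ∀ ω, 0 ≤ P ω) {X : Ω → S} {Y : Ω → T}
    (h : ∀ ω₁ ω₂, X ω₁ = X ω₂ ↔ Y ω₁ = Y ω₂) : entH P X = entH P Y :=
  le_antisymm (entH_le_of_fiber hP0 fun ω₁ ω₂ hh => (h ω₁ ω₂).2 hh)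
    (entH_le_of_fiber hP0 fun ω₁ ω₂ hh => (h ω₁ ω₂).1 hh)

lemma fiber_ratio_le_one {S : Type*} [DecidableEq S] (hP0 : ∀ ω, 0 ≤ P ω) (X : Ω → S) (t : S) :
    ∑ ω ∈ Finset.univ.filter (fun ω => X ω = t), P ω / pm P X ω ≤ 1 := by
  classical
  set F := Finset.univ.filter (fun ω => X ω = t) with hF
  have hpm : ∀ ω ∈ F, pm P X ω = ∑ ω' ∈ F, P ω' := by
    intro ω hω
    rw [hF, Finset.mem_filter] at hω
    unfold pm
    rw [hF]
    congr 1
    ext x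
    simp only [Finset.mem_filter, Finset.mem_univ, true_and]
    rw [hω.2]
  rcases eq_or_lt_of_le (Finset.sum_nonneg (fun ω' (_ : ω' ∈ F) => hP0 ω')) with h0 | h0
  · have : ∀ ω ∈ F, P ω = 0 := by
      have h0' := h0.symm
      rw [Finset.sum_eq_zero_iff_of_nonneg (fun ω' _ => hP0 ω')] at h0'
      exact fun ω hω => h0' ω hω
    calc ∑ ω ∈ F, P ω / pm P X ω = 0 := by
          refine Finset.sum_eq_zero fun ω hω => ?_
          rw [this ω hω]; simp
      _ ≤ 1 := by norm_num
  · have : ∑ ω ∈ F, P ω / pm P X ω = (∑ ω ∈ F, P ω) / (∑ ω' ∈ F, P ω') := by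
      rw [Finset.sum_div]
      exact Finset.sum_congr rfl fun ω hω => by rw [hpm ω hω]
    rw [this, div_self (ne_of_gt h0)]


section Key

variable {U V T : Type*}

lemma hK1_aux [DecidableEq (V × T)] (hP0 : ∀ ω, 0 ≤ P ω)
    (X : Ω → U) (Y : Ω → V) (Z : Ω → T) (ω' : Ω) :
    ∑ ω ∈ Finset.univ.filter (fun ω => (Y ω, Z ω) = (Y ω', Z ω')),
      P ω * pm P (fun ω => (X ω, Z ω)) ω / pm P (fun ω => (X ω, Y ω, Z ω)) ω
    ≤ pm P Z ω' := by
  classical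
  set a := pm P (fun ω => (X ω, Z ω)) with ha
  set p := pm P (fun ω => (X ω, Y ω, Z ω)) with hp
  set F := Finset.univ.filter (fun ω => (Y ω, Z ω) = (Y ω', Z ω')) with hF
  have expand_a : ∀ ω, a ω = ∑ ω'', (if (X ω'', Z ω'') = (X ω, Z ω) then P ω'' else 0) := by
    intro ω
    rw [ha]
    unfold pm
    rw [Finset.sum_filter]
    exact Finset.sum_congr rfl fun x _ => by congr
  calc ∑ ω ∈ F, P ω * a ω / p ω
      = ∑ ω ∈ F, ∑ ω'', (if (X ω'', Z ω'') = (X ω, Z ω) then P ω'' * (P ω / p ω) else 0) := by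
        refine Finset.sum_congr rfl fun ω hω => ?_
        rw [show P ω * a ω / p ω = a ω * (P ω / p ω) by ring, expand_a ω, Finset.sum_mul]
        simp [ite_mul]
    _ = ∑ ω'', ∑ ω ∈ F, (if (X ω'', Z ω'') = (X ω, Z ω) then P ω'' * (P ω / p ω) else 0) :=
        Finset.sum_comm
    _ ≤ ∑ ω'', (if Z ω'' = Z ω' then P ω'' else 0) := by
        refine Finset.sum_le_sum fun ω'' _ => ?_
        by_cases hz : Z ω'' = Z ω'
        · rw [if_pos hz]
          have hset : F.filter (fun ω => (X ω'', Z ω'') = (X ω, Z ω))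
              = Finset.univ.filter (fun ω => (X ω, Y ω, Z ω) = (X ω'', Y ω', Z ω')) := by
            rw [hF, Finset.filter_filter]
            ext x
            simp only [Finset.mem_filter, Finset.mem_univ, true_and, Prod.mk.injEq]
            constructor
            · rintro ⟨⟨h1, h2⟩, h3, h4⟩
              exact ⟨h3.symm, h1, h2⟩
            · rintro ⟨h1, h2, h3⟩
              exact ⟨⟨h2, h3⟩, h1.symm, by rw [hz, h3]⟩
          calc ∑ ω ∈ F, (if (X ω'', Z ω'') = (X ω, Z ω) then P ω'' * (P ω / p ω) else 0)
              = ∑ ω ∈ F.filter (fun ω => (X ω'', Z ω'') = (X ω, Z ω)), P ω'' * (P ω / p ω) :=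
                (Finset.sum_filter _ _).symm
            _ = P ω'' * ∑ ω ∈ Finset.univ.filter
                  (fun ω => (X ω, Y ω, Z ω) = (X ω'', Y ω', Z ω')), P ω / p ω := by
                rw [hset, Finset.mul_sum]
            _ ≤ P ω'' * 1 := by
                refine mul_le_mul_of_nonneg_left ?_ (hP0 ω'')
                exact fiber_ratio_le_one hP0 (fun ω => (X ω, Y ω, Z ω)) (X ω'', Y ω', Z ω')
            _ = P ω'' := mul_one _
        · rw [if_neg hz]
          refine le_of_eq (Finset.sum_eq_zero fun ω hω => ?_)
          rw [hF, Finset.mem_filter] at hω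
          have hzz : Z ω = Z ω' := congrArg Prod.snd hω.2
          rw [if_neg]
          intro hcon
          exact hz (((congrArg Prod.snd hcon : Z ω'' = Z ω)).trans hzz)
    _ = pm P Z ω' := by
        unfold pm
        rw [Finset.sum_filter]

lemma key_sum_le_one (hP0 : ∀ ω, 0 ≤ P ω) (hP1 : ∑ ω, P ω = 1)
    (X : Ω → U) (Y : Ω → V) (Z : Ω → T) :
    ∑ ω, P ω * pm P (fun ω => (X ω, Z ω)) ω * pm P (fun ω => (Y ω, Z ω)) ω /
      (pm P (fun ω => (X ω, Y ω, Z ω)) ω * pm P Z ω) ≤ 1 := by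
  classical
  set a := pm P (fun ω => (X ω, Z ω)) with ha
  set b := pm P (fun ω => (Y ω, Z ω)) with hb
  set c := pm P Z with hc
  set p := pm P (fun ω => (X ω, Y ω, Z ω)) with hp
  have expand_b : ∀ ω, b ω = ∑ ω', (if (Y ω', Z ω') = (Y ω, Z ω) then P ω' else 0) := by
    intro ω
    rw [hb]
    unfold pm
    rw [Finset.sum_filter]
    exact Finset.sum_congr rfl fun x _ => by congr
  have hInner : ∀ ω' : Ω,
      ∑ ω ∈ Finset.univ.filter (fun ω => (Y ω, Z ω) = (Y ω', Z ω')),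
        P ω * a ω / (p ω * c ω) ≤ 1 := by
    intro ω'
    set F := Finset.univ.filter (fun ω => (Y ω, Z ω) = (Y ω', Z ω')) with hF
    have hcF : ∀ ω ∈ F, c ω = c ω' := by
      intro ω hω
      rw [hF, Finset.mem_filter] at hω
      exact pm_congr (congrArg Prod.snd hω.2)
    by_cases hc0 : c ω' = 0
    · refine le_trans (le_of_eq (Finset.sum_eq_zero fun ω hω => ?_)) zero_le_one
      rw [hcF ω hω, hc0, mul_zero, div_zero]
    · have hcpos : 0 < c ω' := lt_of_le_of_ne (pm_nonneg hP0 Z ω') (Ne.symm hc0)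
      have heq : ∑ ω ∈ F, P ω * a ω / (p ω * c ω)
          = (∑ ω ∈ F, P ω * a ω / p ω) / c ω' := by
        rw [Finset.sum_div]
        refine Finset.sum_congr rfl fun ω hω => ?_
        rw [← div_div, hcF ω hω]
      rw [heq]
      rw [div_le_one hcpos]
      exact hK1_aux hP0 X Y Z ω'
  calc ∑ ω, P ω * a ω * b ω / (p ω * c ω)
      = ∑ ω, ∑ ω', (if (Y ω', Z ω') = (Y ω, Z ω) then P ω' * (P ω * a ω / (p ω * c ω)) else 0) := by
        refine Finset.sum_congr rfl fun ω _ => ?_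
        rw [show P ω * a ω * b ω / (p ω * c ω) = b ω * (P ω * a ω / (p ω * c ω)) by ring,
          expand_b ω, Finset.sum_mul]
        simp [ite_mul]
    _ = ∑ ω', ∑ ω, (if (Y ω', Z ω') = (Y ω, Z ω) then P ω' * (P ω * a ω / (p ω * c ω)) else 0) :=
        Finset.sum_comm
    _ ≤ ∑ ω', P ω' := by
        refine Finset.sum_le_sum fun ω' _ => ?_
        have : ∑ ω, (if (Y ω', Z ω') = (Y ω, Z ω) then P ω' * (P ω * a ω / (p ω * c ω)) else 0)
            = P ω' * ∑ ω ∈ Finset.univ.filter (fun ω => (Y ω, Z ω) = (Y ω', Z ω')),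
                P ω * a ω / (p ω * c ω) := by
          rw [Finset.mul_sum, Finset.sum_filter]
          refine Finset.sum_congr rfl fun ω _ => ?_
          by_cases h : (Y ω, Z ω) = (Y ω', Z ω')
          · rw [if_pos h.symm, if_pos h]
          · rw [if_neg (fun hh => h hh.symm), if_neg h]
        rw [this]
        calc P ω' * ∑ ω ∈ Finset.univ.filter (fun ω => (Y ω, Z ω) = (Y ω', Z ω')),
              P ω * a ω / (p ω * c ω) ≤ P ω' * 1 :=
              mul_le_mul_of_nonneg_left (hInner ω') (hP0 ω')
          _ = P ω' := mul_one _
    _ = 1 := hP1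

end Key

section Calc

variable {U V T T' : Type*}

lemma submod (hP0 : ∀ ω, 0 ≤ P ω) (hP1 : ∑ ω, P ω = 1)
    (X : Ω → U) (Y : Ω → V) (Z : Ω → T) :
    entH P (fun ω => (X ω, Y ω, Z ω)) + entH P Z
      ≤ entH P (fun ω => (X ω, Z ω)) + entH P (fun ω => (Y ω, Z ω)) := by
  classical
  set a := pm P (fun ω => (X ω, Z ω)) with ha
  set b := pm P (fun ω => (Y ω, Z ω)) with hb
  set c := pm P Z with hc
  set p := pm P (fun ω => (X ω, Y ω, Z ω)) with hp
  have hl2 : (0:ℝ) < Real.log 2 := Real.log_pos (by norm_num)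
  have hpa : ∀ ω, p ω ≤ a ω := by
    refine pm_mono hP0 fun ω₁ ω₂ h => ?_
    simp only [Prod.mk.injEq] at h ⊢
    exact ⟨h.1, h.2.2⟩
  have hpb : ∀ ω, p ω ≤ b ω := by
    refine pm_mono hP0 fun ω₁ ω₂ h => ?_
    simp only [Prod.mk.injEq] at h ⊢
    exact ⟨h.2.1, h.2.2⟩
  have hacc : ∀ ω, a ω ≤ c ω := by
    refine pm_mono hP0 fun ω₁ ω₂ h => ?_
    simp only [Prod.mk.injEq] at h
    exact h.2
  have hPp : ∀ ω, P ω ≤ p ω := le_pm hP0 _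
  have pointwise : ∀ ω ∈ (Finset.univ : Finset Ω),
      (-(P ω * Real.logb 2 (p ω)) + -(P ω * Real.logb 2 (c ω)))
        - (-(P ω * Real.logb 2 (a ω)) + -(P ω * Real.logb 2 (b ω)))
      ≤ (P ω * a ω * b ω / (p ω * c ω) - P ω) / Real.log 2 := by
    intro ω _
    rcases eq_or_lt_of_le (hP0 ω) with h0 | h0
    · simp [← h0]
    · have hp0 : 0 < p ω := lt_of_lt_of_le h0 (hPp ω)
      have ha0 : 0 < a ω := lt_of_lt_of_le hp0 (hpa ω)
      have hb0 : 0 < b ω := lt_of_lt_of_le hp0 (hpb ω)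
      have hc0 : 0 < c ω := lt_of_lt_of_le ha0 (hacc ω)
      have hlog : Real.logb 2 (a ω) + Real.logb 2 (b ω)
          - Real.logb 2 (p ω) - Real.logb 2 (c ω)
          = Real.logb 2 (a ω * b ω / (p ω * c ω)) := by
        rw [Real.logb_div (by positivity) (by positivity),
          Real.logb_mul (ne_of_gt ha0) (ne_of_gt hb0),
          Real.logb_mul (ne_of_gt hp0) (ne_of_gt hc0)]
        ring
      have hq : 0 < a ω * b ω / (p ω * c ω) := by positivity
      have h2 : Real.logb 2 (a ω * b ω / (p ω * c ω))
          ≤ (a ω * b ω / (p ω * c ω) - 1) / Real.log 2 := by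
        rw [Real.logb]
        exact (div_le_div_iff_of_pos_right hl2).mpr (Real.log_le_sub_one_of_pos hq)
      have h3 : P ω * (Real.logb 2 (a ω) + Real.logb 2 (b ω)
          - Real.logb 2 (p ω) - Real.logb 2 (c ω))
          ≤ P ω * ((a ω * b ω / (p ω * c ω) - 1) / Real.log 2) := by
        rw [hlog]
        exact mul_le_mul_of_nonneg_left h2 (le_of_lt h0)
      have h4 : P ω * ((a ω * b ω / (p ω * c ω) - 1) / Real.log 2)
          = (P ω * a ω * b ω / (p ω * c ω) - P ω) / Real.log 2 := by
        field_simp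
      rw [h4] at h3
      nlinarith [h3]
  have hsum := Finset.sum_le_sum pointwise
  rw [Finset.sum_sub_distrib, Finset.sum_add_distrib, Finset.sum_add_distrib] at hsum
  have hkey := key_sum_le_one hP0 hP1 X Y Z
  have hend : ∑ ω, (P ω * a ω * b ω / (p ω * c ω) - P ω) / Real.log 2 ≤ 0 := by
    rw [← Finset.sum_div, Finset.sum_sub_distrib, hP1]
    exact div_nonpos_of_nonpos_of_nonneg (sub_nonpos.mpr hkey) (le_of_lt hl2)
  rw [entH_eq P (fun ω => (X ω, Y ω, Z ω)), entH_eq P Z,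
    entH_eq P (fun ω => (X ω, Z ω)), entH_eq P (fun ω => (Y ω, Z ω))]
  rw [← ha, ← hb, ← hc, ← hp]
  linarith

lemma entH_const (hP1 : ∑ ω, P ω = 1) {X : Ω → U}
    (hconst : ∀ ω₁ ω₂ : Ω, X ω₁ = X ω₂) : entH P X = 0 := by
  classical
  rw [entH_eq]
  have hpm : ∀ ω, pm P X ω = 1 := by
    intro ω
    unfold pm
    rw [← hP1]
    congr 1
    apply Finset.filter_true_of_mem
    intro x _
    exact hconst x ω
  refine Finset.sum_eq_zero fun ω _ => ?_
  rw [hpm ω, Real.logb_one]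
  simp

lemma condH_nonneg (hP0 : ∀ ω, 0 ≤ P ω) (X : Ω → U) (Y : Ω → T) :
    0 ≤ condH P X Y := by
  unfold condH
  have := entH_le_of_fiber hP0 (X := fun ω => (X ω, Y ω)) (Y := Y)
    (fun ω₁ ω₂ h => congrArg Prod.snd h)
  linarith

lemma subadd (hP0 : ∀ ω, 0 ≤ P ω) (hP1 : ∑ ω, P ω = 1) (X : Ω → U) (Y : Ω → V) :
    entH P (fun ω => (X ω, Y ω)) ≤ entH P X + entH P Y := by
  have h := submod hP0 hP1 X Y (fun _ => (0 : ℕ))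
  have h0 : entH P (fun _ : Ω => (0 : ℕ)) = 0 := entH_const hP1 (fun _ _ => rfl)
  have h1 : entH P (fun ω => (X ω, Y ω, (0:ℕ))) = entH P (fun ω => (X ω, Y ω)) :=
    entH_congr_fiber hP0 (fun ω₁ ω₂ => by simp [Prod.ext_iff])
  have h2 : entH P (fun ω => (X ω, (0:ℕ))) = entH P X :=
    entH_congr_fiber hP0 (fun ω₁ ω₂ => by simp [Prod.ext_iff])
  have h3 : entH P (fun ω => (Y ω, (0:ℕ))) = entH P Y :=
    entH_congr_fiber hP0 (fun ω₁ ω₂ => by simp [Prod.ext_iff])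
  linarith

lemma condH_le_entH (hP0 : ∀ ω, 0 ≤ P ω) (hP1 : ∑ ω, P ω = 1) (X : Ω → U) (Y : Ω → T) :
    condH P X Y ≤ entH P X := by
  unfold condH
  have := subadd hP0 hP1 X Y
  linarith

lemma condH_pair_le (hP0 : ∀ ω, 0 ≤ P ω) (hP1 : ∑ ω, P ω = 1)
    (X : Ω → U) (Y : Ω → V) (Z : Ω → T) :
    condH P (fun ω => (X ω, Y ω)) Z ≤ condH P X Z + condH P Y Z := by
  unfold condH
  have h := submod hP0 hP1 X Y Z
  have h1 : entH P (fun ω => ((X ω, Y ω), Z ω)) = entH P (fun ω => (X ω, Y ω, Z ω)) :=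
    entH_congr_fiber hP0 (fun ω₁ ω₂ => by simp [Prod.ext_iff]; tauto)
  linarith

/-- Conditioning on a finer variable gives smaller conditional entropy:
if `Z` is a function of `Y` then `H(X|Y) ≤ H(X|Z)`. -/
lemma condH_mono_fiber (hP0 : ∀ ω, 0 ≤ P ω) (hP1 : ∑ ω, P ω = 1)
    (X : Ω → U) {Y : Ω → T} {Z : Ω → T'}
    (hYZ : ∀ ω₁ ω₂, Y ω₁ = Y ω₂ → Z ω₁ = Z ω₂) :
    condH P X Y ≤ condH P X Z := by
  unfold condH
  have h := submod hP0 hP1 X Y Z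
  have h1 : entH P (fun ω => (X ω, Y ω, Z ω)) = entH P (fun ω => (X ω, Y ω)) := by
    refine entH_congr_fiber hP0 (fun ω₁ ω₂ => ?_)
    simp only [Prod.mk.injEq]
    exact ⟨fun h => ⟨h.1, h.2.1⟩, fun h => ⟨h.1, h.2, hYZ _ _ h.2⟩⟩
  have h2 : entH P (fun ω => (Y ω, Z ω)) = entH P Y := by
    refine entH_congr_fiber hP0 (fun ω₁ ω₂ => ?_)
    simp only [Prod.mk.injEq]
    exact ⟨fun h => h.1, fun h => ⟨h, hYZ _ _ h⟩⟩
  linarith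

/-- If `X` is (pointwise) a function of `Y` then `H(X|Y) = 0`. -/
lemma condH_zero_of_fiber (hP0 : ∀ ω, 0 ≤ P ω) {X : Ω → U} {Y : Ω → T}
    (h : ∀ ω₁ ω₂, Y ω₁ = Y ω₂ → X ω₁ = X ω₂) : condH P X Y = 0 := by
  unfold condH
  rw [entH_congr_fiber hP0 (X := fun ω => (X ω, Y ω)) (Y := Y)
    (fun ω₁ ω₂ => by
      simp only [Prod.mk.injEq]
      exact ⟨fun hh => hh.2, fun hh => ⟨h _ _ hh, hh⟩⟩)]
  exact sub_self _

/-- If `H(X|Y) = 0` and `Y` is a function of `Y'` then `H(X|Y') = 0`. -/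
lemma condH_zero_mono (hP0 : ∀ ω, 0 ≤ P ω) (hP1 : ∑ ω, P ω = 1)
    {X : Ω → U} {Y : Ω → T} {Y' : Ω → T'}
    (hfn : ∀ ω₁ ω₂, Y' ω₁ = Y' ω₂ → Y ω₁ = Y ω₂)
    (h : condH P X Y = 0) : condH P X Y' = 0 :=
  le_antisymm (by calc condH P X Y' ≤ condH P X Y := condH_mono_fiber hP0 hP1 X hfn
                  _ = 0 := h)
    (condH_nonneg hP0 X Y')

lemma condH_pair_zero (hP0 : ∀ ω, 0 ≤ P ω) (hP1 : ∑ ω, P ω = 1)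
    {X : Ω → U} {Y : Ω → V} {C : Ω → T}
    (h1 : condH P X C = 0) (h2 : condH P Y C = 0) :
    condH P (fun ω => (X ω, Y ω)) C = 0 :=
  le_antisymm (by calc condH P (fun ω => (X ω, Y ω)) C ≤ condH P X C + condH P Y C :=
                    condH_pair_le hP0 hP1 X Y C
                  _ = 0 := by rw [h1, h2]; ring)
    (condH_nonneg hP0 _ C)

/-- If `H(X|C) = 0` then `H(B,X,C) = H(B,C)`. -/
lemma entH_drop (hP0 : ∀ ω, 0 ≤ P ω) (hP1 : ∑ ω, P ω = 1)
    {X : Ω → U} {C : Ω → T} (h : condH P X C = 0) (B : Ω → V) :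
    entH P (fun ω => (B ω, X ω, C ω)) = entH P (fun ω => (B ω, C ω)) := by
  have h1 : condH P X (fun ω => (B ω, C ω)) = 0 :=
    condH_zero_mono hP0 hP1 (fun ω₁ ω₂ hh => congrArg Prod.snd hh) h
  unfold condH at h1
  have h2 : entH P (fun ω => (X ω, B ω, C ω)) = entH P (fun ω => (B ω, X ω, C ω)) :=
    entH_congr_fiber hP0 (fun ω₁ ω₂ => by simp [Prod.ext_iff]; tauto)
  linarith

lemma entH_pair_comm (hP0 : ∀ ω, 0 ≤ P ω) (X : Ω → U) (Y : Ω → V) :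
    entH P (fun ω => (X ω, Y ω)) = entH P (fun ω => (Y ω, X ω)) :=
  entH_congr_fiber hP0 (fun ω₁ ω₂ => by simp only [Prod.mk.injEq]; tauto)

lemma condH_congr_fst (hP0 : ∀ ω, 0 ≤ P ω) {X : Ω → U} {X' : Ω → V} (C : Ω → T)
    (h : ∀ ω₁ ω₂, X ω₁ = X ω₂ ↔ X' ω₁ = X' ω₂) : condH P X C = condH P X' C := by
  unfold condH
  rw [entH_congr_fiber hP0 (X := fun ω => (X ω, C ω)) (Y := fun ω => (X' ω, C ω))
    (fun ω₁ ω₂ => by simp only [Prod.mk.injEq]; exact and_congr_left fun _ => h ω₁ ω₂)]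

end Calc

section Joint

variable {n : ℕ} {σW : Fin n → Type*} {σS : Fin n → Fin n → Type*} {T : Type*}

/-- Fibers of `jointW W (insert a J)` and of the pair `(W a, jointW W J)` agree. -/
lemma jointW_insert_fiber (W : ∀ j, Ω → σW j) (a : Fin n) (J : Finset (Fin n)) (ω₁ ω₂ : Ω) :
    jointW W (insert a J) ω₁ = jointW W (insert a J) ω₂ ↔
      (W a ω₁, jointW W J ω₁) = (W a ω₂, jointW W J ω₂) := by
  simp only [Prod.mk.injEq]
  constructor
  · intro h
    refine ⟨congrFun h ⟨a, Finset.mem_insert_self a J⟩, funext fun i => ?_⟩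
    exact congrFun h ⟨i.1, Finset.mem_insert_of_mem i.2⟩
  · rintro ⟨h1, h2⟩
    funext i
    obtain ⟨i, hi⟩ := i
    rcases Finset.mem_insert.mp hi with rfl | hi'
    · exact h1
    · exact congrFun h2 ⟨i, hi'⟩

lemma jointW_erase_fiber (W : ∀ j, Ω → σW j) {j : Fin n} {R : Finset (Fin n)} (hj : j ∈ R)
    (ω₁ ω₂ : Ω) :
    jointW W R ω₁ = jointW W R ω₂ ↔
      (W j ω₁, jointW W (R.erase j) ω₁) = (W j ω₂, jointW W (R.erase j) ω₂) := by
  simp only [Prod.mk.injEq]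
  constructor
  · intro h
    refine ⟨congrFun h ⟨j, hj⟩, funext fun i => ?_⟩
    exact congrFun h ⟨i.1, Finset.mem_of_mem_erase i.2⟩
  · rintro ⟨h1, h2⟩
    funext i
    obtain ⟨i, hi⟩ := i
    by_cases hij : i = j
    · subst hij; exact h1
    · exact congrFun h2 ⟨i, Finset.mem_erase.mpr ⟨hij, hi⟩⟩

/-- Subadditivity for joints over a finset. -/
lemma jointW_subadd (hP0 : ∀ ω, 0 ≤ P ω) (hP1 : ∑ ω, P ω = 1)
    (W : ∀ j, Ω → σW j) (J : Finset (Fin n)) :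
    entH P (jointW W J) ≤ ∑ i ∈ J, entH P (W i) := by
  classical
  induction J using Finset.induction_on with
  | empty =>
    rw [Finset.sum_empty, entH_const hP1 (X := jointW W ∅)
      (fun ω₁ ω₂ => funext fun i => (Finset.notMem_empty _ i.2).elim)]
  | @insert a J' ha ih =>
    rw [Finset.sum_insert ha]
    calc entH P (jointW W (insert a J'))
        = entH P (fun ω => (W a ω, jointW W J' ω)) :=
          entH_congr_fiber hP0 (jointW_insert_fiber W a J')
      _ ≤ entH P (W a) + entH P (jointW W J') := subadd hP0 hP1 _ _
      _ ≤ entH P (W a) + ∑ i ∈ J', entH P (W i) := by linarith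
  
lemma jointSto_insert_fiber (S : ∀ i j, Ω → σS i j) (a : Fin n) (I : Finset (Fin n))
    (j : Fin n) (ω₁ ω₂ : Ω) :
    jointSto S (insert a I) j ω₁ = jointSto S (insert a I) j ω₂ ↔
      (S a j ω₁, jointSto S I j ω₁) = (S a j ω₂, jointSto S I j ω₂) := by
  simp only [Prod.mk.injEq]
  constructor
  · intro h
    refine ⟨congrFun h ⟨a, Finset.mem_insert_self a I⟩, funext fun i => ?_⟩
    exact congrFun h ⟨i.1, Finset.mem_insert_of_mem i.2⟩
  · rintro ⟨h1, h2⟩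
    funext i
    obtain ⟨i, hi⟩ := i
    rcases Finset.mem_insert.mp hi with rfl | hi'
    · exact h1
    · exact congrFun h2 ⟨i, hi'⟩

lemma jointSto_cond_subadd (hP0 : ∀ ω, 0 ≤ P ω) (hP1 : ∑ ω, P ω = 1)
    (S : ∀ i j, Ω → σS i j) (I : Finset (Fin n)) (j : Fin n) (C : Ω → T) :
    condH P (jointSto S I j) C ≤ ∑ i ∈ I, condH P (S i j) C := by
  classical
  induction I using Finset.induction_on with
  | empty =>
    rw [Finset.sum_empty, condH_zero_of_fiber hP0
      (fun ω₁ ω₂ _ => funext fun i => (Finset.notMem_empty _ i.2).elim)]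
  | @insert a I' ha ih =>
    rw [Finset.sum_insert ha]
    calc condH P (jointSto S (insert a I') j) C
        = condH P (fun ω => (S a j ω, jointSto S I' j ω)) C :=
          condH_congr_fst hP0 C (jointSto_insert_fiber S a I' j)
      _ ≤ condH P (S a j) C + condH P (jointSto S I' j) C := condH_pair_le hP0 hP1 _ _ _
      _ ≤ condH P (S a j) C + ∑ i ∈ I', condH P (S i j) C := by linarith

lemma jointS_prod_insert_fiber (S : ∀ i j, Ω → σS i j) (M' : Finset (Fin n)) (a : Fin n)
    (L : Finset (Fin n)) (ω₁ ω₂ : Ω) :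
    jointS S (M' ×ˢ insert a L) ω₁ = jointS S (M' ×ˢ insert a L) ω₂ ↔
      (jointSto S M' a ω₁, jointS S (M' ×ˢ L) ω₁)
        = (jointSto S M' a ω₂, jointS S (M' ×ˢ L) ω₂) := by
  simp only [Prod.mk.injEq]
  constructor
  · intro h
    constructor
    · funext i
      exact congrFun h ⟨(i.1, a),
        Finset.mem_product.mpr ⟨i.2, Finset.mem_insert_self a L⟩⟩
    · funext e
      have he := Finset.mem_product.mp e.2
      exact congrFun h ⟨e.1,
        Finset.mem_product.mpr ⟨he.1, Finset.mem_insert_of_mem he.2⟩⟩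
  · rintro ⟨h1, h2⟩
    funext e
    obtain ⟨⟨e1, e2⟩, he⟩ := e
    have he' := Finset.mem_product.mp he
    rcases Finset.mem_insert.mp he'.2 with rfl | h2'
    · exact congrFun h1 ⟨e1, he'.1⟩
    · exact congrFun h2 ⟨(e1, e2), Finset.mem_product.mpr ⟨he'.1, h2'⟩⟩

lemma jointS_cond_subadd (hP0 : ∀ ω, 0 ≤ P ω) (hP1 : ∑ ω, P ω = 1)
    (S : ∀ i j, Ω → σS i j) (M' : Finset (Fin n)) (L : Finset (Fin n)) (C : Ω → T) :
    condH P (jointS S (M' ×ˢ L)) C ≤ ∑ j ∈ L, condH P (jointSto S M' j) C := by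
  classical
  induction L using Finset.induction_on with
  | empty =>
    rw [Finset.sum_empty, Finset.product_empty, condH_zero_of_fiber hP0
      (fun ω₁ ω₂ _ => funext fun e => (Finset.notMem_empty _ e.2).elim)]
  | @insert a L' ha ih =>
    rw [Finset.sum_insert ha]
    calc condH P (jointS S (M' ×ˢ insert a L')) C
        = condH P (fun ω => (jointSto S M' a ω, jointS S (M' ×ˢ L') ω)) C :=
          condH_congr_fst hP0 C (jointS_prod_insert_fiber S M' a L')
      _ ≤ condH P (jointSto S M' a) C + condH P (jointS S (M' ×ˢ L')) C :=
          condH_pair_le hP0 hP1 _ _ _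
      _ ≤ condH P (jointSto S M' a) C + ∑ j ∈ L', condH P (jointSto S M' j) C := by linarith

end Joint

end RegenAux

/-- Proposition, Eq. (18) of SSK: for `L ⊆ R`, `R ∩ M' = ∅`,
`ℓ = |L| ≥ 1`, `m = |M'| ≥ 1`, `r = |R|`, `r + m ≤ k`:
`H(W_R | W_{M'}) + (ℓ-1)H(W_R) + H(S_{M'}^L) ≤ ℓ(rα + β) + ℓ((d-r)β - α)`. -/
theorem stmt_7 {Ω : Type*} [Fintype Ω] {n k d : ℕ} {B α β : ℝ} {P : Ω → ℝ}
    {σM : Type*} {σW : Fin n → Type*} {σS : Fin n → Fin n → Type*}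
    {M : Ω → σM} {W : ∀ j, Ω → σW j} {S : ∀ i j, Ω → σS i j}
    (hcode : IsRegenCode n k d B α β P M W S)
    (L R M' : Finset (Fin n)) (hLR : L ⊆ R) (hdisj : Disjoint R M')
    (hL : 1 ≤ L.card) (hM' : 1 ≤ M'.card) (hrm : R.card + M'.card ≤ k) :
    condH P (jointW W R) (jointW W M')
      + ((L.card - 1 : ℕ) : ℝ) * entH P (jointW W R)
      + entH P (jointS S (M' ×ˢ L))
    ≤ (L.card : ℝ) * ((R.card : ℝ) * α + β)
      + (L.card : ℝ) * (((d - R.card : ℕ) : ℝ) * β - α) := by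
  classical
  obtain ⟨hP0, hP1, hk, hkd, hdn, hB, hα, hβ, hMB, hWα, hWM, hMW, hSβ, hSW, hWS⟩ := hcode
  set A := jointW W R with hA
  set Bm := jointW W M' with hBm
  set SL := jointS S (M' ×ˢ L) with hSLdef
  have hrR : 1 ≤ R.card := le_trans hL (Finset.card_le_card hLR)
  have hrd : R.card + 1 ≤ d := by omega
  set C3 : ℝ := ((R.card - 1 : ℕ) : ℝ) * α + ((d - (R.card - 1) : ℕ) : ℝ) * β with hC3
  -- `S_{M'}^L` is determined by `W_{M'}`
  have hQBm : ∀ j ∈ L, condH P (jointSto S M' j) Bm ≤ 0 := by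
    intro j hj
    calc condH P (jointSto S M' j) Bm ≤ ∑ i ∈ M', condH P (S i j) Bm :=
        RegenAux.jointSto_cond_subadd hP0 hP1 S M' j Bm
      _ ≤ ∑ _i ∈ M', (0:ℝ) := by
        refine Finset.sum_le_sum fun i hi => ?_
        have hij : i ≠ j := fun h => (Finset.disjoint_left.mp hdisj (hLR hj)) (h ▸ hi)
        have hWiBm : ∀ ω₁ ω₂, Bm ω₁ = Bm ω₂ → W i ω₁ = W i ω₂ :=
          fun ω₁ ω₂ h => congrFun h ⟨i, hi⟩
        calc condH P (S i j) Bm ≤ condH P (S i j) (W i) :=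
            RegenAux.condH_mono_fiber hP0 hP1 _ hWiBm
          _ = 0 := hSW i j hij
      _ = 0 := by simp
  have hSLBm : condH P SL Bm = 0 := by
    refine le_antisymm ?_ (RegenAux.condH_nonneg hP0 _ _)
    calc condH P SL Bm ≤ ∑ j ∈ L, condH P (jointSto S M' j) Bm :=
        RegenAux.jointS_cond_subadd hP0 hP1 S M' L Bm
      _ ≤ ∑ _j ∈ L, (0:ℝ) := Finset.sum_le_sum hQBm
      _ = 0 := by simp
  -- Step 1 : H(A|Bm) ≤ H(A,SL) - H(SL)
  have hstep1 : condH P A Bm ≤ entH P (fun ω => (A ω, SL ω)) - entH P SL := by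
    have e1 : entH P (fun ω => (A ω, SL ω, Bm ω)) = entH P (fun ω => (A ω, Bm ω)) :=
      RegenAux.entH_drop hP0 hP1 hSLBm A
    have e2a : condH P A (fun ω => (SL ω, Bm ω))
        = entH P (fun ω => (A ω, SL ω, Bm ω)) - entH P (fun ω => (SL ω, Bm ω)) := rfl
    have e2b : entH P (fun ω => (SL ω, Bm ω)) - entH P Bm = 0 := hSLBm
    have e2c : condH P A Bm = entH P (fun ω => (A ω, Bm ω)) - entH P Bm := rfl
    have e3 : condH P A (fun ω => (SL ω, Bm ω)) ≤ condH P A SL :=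
      RegenAux.condH_mono_fiber hP0 hP1 A (fun ω₁ ω₂ h => congrArg Prod.fst h)
    have e4 : condH P A SL = entH P (fun ω => (A ω, SL ω)) - entH P SL := rfl
    linarith
  -- Step 3 : for each j ∈ L, H(S_{M'}^j, A) ≤ C3
  have hstep3 : ∀ j ∈ L, entH P (fun ω => (jointSto S M' j ω, A ω)) ≤ C3 := by
    intro j hj
    have hjR : j ∈ R := hLR hj
    have hsub : (R.erase j) ∪ M' ⊆ Finset.univ.erase j := by
      intro x hx
      rcases Finset.mem_union.mp hx with hx | hx
      · exact Finset.mem_erase.mpr ⟨(Finset.mem_erase.mp hx).1, Finset.mem_univ x⟩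
      · refine Finset.mem_erase.mpr ⟨?_, Finset.mem_univ x⟩
        intro hxj
        exact (Finset.disjoint_left.mp hdisj hjR) (hxj ▸ hx)
    have hcard1 : ((R.erase j) ∪ M').card ≤ d := by
      have h1 := Finset.card_union_le (R.erase j) M'
      rw [Finset.card_erase_of_mem hjR] at h1
      omega
    have hcard2 : d ≤ (Finset.univ.erase j).card := by
      rw [Finset.card_erase_of_mem (Finset.mem_univ j), Finset.card_univ, Fintype.card_fin]
      omega
    obtain ⟨I, hI1, hI2, hIcard⟩ := Finset.exists_subsuperset_card_eq hsub hcard1 hcard2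
    have hjI : j ∉ I := fun h => (Finset.mem_erase.mp (hI2 h)).1 rfl
    have hRI : R.erase j ⊆ I := fun x hx => hI1 (Finset.mem_union_left _ hx)
    have hMI : M' ⊆ I := fun x hx => hI1 (Finset.mem_union_right _ hx)
    set A' := jointW W (R.erase j) with hA'
    set Tv := jointSto S I j with hTv
    set Q := jointSto S M' j with hQdef
    have hWjT : condH P (W j) Tv = 0 := hWS j I (le_of_eq hIcard.symm) hjI
    have hQT : ∀ ω₁ ω₂, Tv ω₁ = Tv ω₂ → Q ω₁ = Q ω₂ := by
      intro ω₁ ω₂ h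
      funext i
      exact congrFun h ⟨i.1, hMI i.2⟩
    have hQTzero : condH P Q Tv = 0 := RegenAux.condH_zero_of_fiber hP0 hQT
    have c1 : entH P (fun ω => (Q ω, A ω)) = entH P (fun ω => (Q ω, W j ω, A' ω)) := by
      refine RegenAux.entH_congr_fiber hP0 (fun ω₁ ω₂ => ?_)
      have hWerase := RegenAux.jointW_erase_fiber W hjR ω₁ ω₂
      simp only [Prod.mk.injEq] at hWerase ⊢
      constructor
      · rintro ⟨h1, h2⟩
        exact ⟨h1, hWerase.mp h2⟩
      · rintro ⟨h1, h2, h3⟩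
        exact ⟨h1, hWerase.mpr ⟨h2, h3⟩⟩
    have c2 : entH P (fun ω => (Q ω, W j ω, A' ω))
        ≤ entH P (fun ω => ((Q ω, W j ω, A' ω), Tv ω)) :=
      RegenAux.entH_le_of_fiber hP0 (fun ω₁ ω₂ h => congrArg Prod.fst h)
    have c3 : entH P (fun ω => ((Q ω, W j ω, A' ω), Tv ω))
        = entH P (fun ω => ((Q ω, A' ω), W j ω, Tv ω)) :=
      RegenAux.entH_congr_fiber hP0 (fun ω₁ ω₂ => by simp only [Prod.mk.injEq]; tauto)
    have c4 : entH P (fun ω => ((Q ω, A' ω), W j ω, Tv ω))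
        = entH P (fun ω => ((Q ω, A' ω), Tv ω)) :=
      RegenAux.entH_drop hP0 hP1 hWjT _
    have c5 : entH P (fun ω => ((Q ω, A' ω), Tv ω))
        = entH P (fun ω => (A' ω, Q ω, Tv ω)) :=
      RegenAux.entH_congr_fiber hP0 (fun ω₁ ω₂ => by simp only [Prod.mk.injEq]; tauto)
    have c6 : entH P (fun ω => (A' ω, Q ω, Tv ω)) = entH P (fun ω => (A' ω, Tv ω)) :=
      RegenAux.entH_drop hP0 hP1 hQTzero _
    have c7a : condH P Tv A' = entH P (fun ω => (Tv ω, A' ω)) - entH P A' := rfl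
    have c7b : entH P (fun ω => (A' ω, Tv ω)) = entH P (fun ω => (Tv ω, A' ω)) :=
      RegenAux.entH_pair_comm hP0 A' Tv
    have c8 : condH P Tv A' ≤ ∑ i ∈ I, condH P (S i j) A' :=
      RegenAux.jointSto_cond_subadd hP0 hP1 S I j A'
    have c9 : ∑ i ∈ I, condH P (S i j) A' ≤ ((d - (R.card - 1) : ℕ) : ℝ) * β := by
      have hfilter : I.filter (fun i => ¬ i ∈ R.erase j) = I \ R.erase j := by
        ext x
        simp [Finset.mem_sdiff, Finset.mem_filter]
      calc ∑ i ∈ I, condH P (S i j) A'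
          ≤ ∑ i ∈ I, (if i ∈ R.erase j then (0:ℝ) else β) := by
            refine Finset.sum_le_sum fun i hi => ?_
            have hij : i ≠ j := fun h => hjI (h ▸ hi)
            by_cases hiR : i ∈ R.erase j
            · rw [if_pos hiR]
              have hfn : ∀ ω₁ ω₂, A' ω₁ = A' ω₂ → W i ω₁ = W i ω₂ :=
                fun ω₁ ω₂ h => congrFun h ⟨i, hiR⟩
              calc condH P (S i j) A' ≤ condH P (S i j) (W i) :=
                  RegenAux.condH_mono_fiber hP0 hP1 _ hfn
                _ = 0 := hSW i j hij
            · rw [if_neg hiR]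
              calc condH P (S i j) A' ≤ entH P (S i j) :=
                  RegenAux.condH_le_entH hP0 hP1 _ _
                _ = β := hSβ i j hij
        _ = ((I \ R.erase j).card : ℝ) * β := by
            rw [Finset.sum_ite, Finset.sum_const, Finset.sum_const, smul_zero, zero_add,
              nsmul_eq_mul, hfilter]
        _ = ((d - (R.card - 1) : ℕ) : ℝ) * β := by
            rw [Finset.card_sdiff_of_subset hRI, hIcard, Finset.card_erase_of_mem hjR]
    have c10 : entH P A' ≤ ((R.card - 1 : ℕ) : ℝ) * α := by
      calc entH P A' ≤ ∑ i ∈ R.erase j, entH P (W i) :=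
          RegenAux.jointW_subadd hP0 hP1 W _
        _ = (((R.erase j).card : ℕ) : ℝ) * α := by
            rw [Finset.sum_congr rfl (fun i _ => hWα i), Finset.sum_const, nsmul_eq_mul]
        _ = ((R.card - 1 : ℕ) : ℝ) * α := by rw [Finset.card_erase_of_mem hjR]
    rw [hC3]
    linarith
  -- Step 2 and final assembly
  have hAcomm : ∀ j : Fin n, condH P (jointSto S M' j) A
      = entH P (fun ω => (jointSto S M' j ω, A ω)) - entH P A := fun j => rfl
  have hSLA : condH P SL A ≤ ∑ j ∈ L, condH P (jointSto S M' j) A :=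
    RegenAux.jointS_cond_subadd hP0 hP1 S M' L A
  have hsum3 : ∑ j ∈ L, condH P (jointSto S M' j) A ≤ (L.card : ℝ) * (C3 - entH P A) := by
    calc ∑ j ∈ L, condH P (jointSto S M' j) A ≤ ∑ _j ∈ L, (C3 - entH P A) := by
          refine Finset.sum_le_sum fun j hj => ?_
          rw [hAcomm j]
          linarith [hstep3 j hj]
      _ = (L.card : ℝ) * (C3 - entH P A) := by rw [Finset.sum_const, nsmul_eq_mul]
  have hASLa : condH P SL A = entH P (fun ω => (SL ω, A ω)) - entH P A := rfl
  have hASLb : entH P (fun ω => (A ω, SL ω)) = entH P (fun ω => (SL ω, A ω)) :=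
    RegenAux.entH_pair_comm hP0 A SL
  have hcast1 : ((L.card - 1 : ℕ) : ℝ) = (L.card : ℝ) - 1 := by
    rw [Nat.cast_sub hL]; simp
  have hcast2 : ((R.card - 1 : ℕ) : ℝ) = (R.card : ℝ) - 1 := by
    rw [Nat.cast_sub hrR]; simp
  have hcast3 : ((d - (R.card - 1) : ℕ) : ℝ) = (d : ℝ) - (R.card : ℝ) + 1 := by
    have h1 : R.card - 1 ≤ d := by omega
    rw [Nat.cast_sub h1, hcast2]; ring
  have hcast4 : ((d - R.card : ℕ) : ℝ) = (d : ℝ) - (R.card : ℝ) := by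
    rw [Nat.cast_sub (by omega)]
  calc condH P A Bm + ((L.card - 1 : ℕ) : ℝ) * entH P A + entH P SL
      ≤ (entH P (fun ω => (A ω, SL ω)) - entH P SL)
        + ((L.card - 1 : ℕ) : ℝ) * entH P A + entH P SL := by linarith
    _ = entH P (fun ω => (A ω, SL ω)) + ((L.card - 1 : ℕ) : ℝ) * entH P A := by ring
    _ ≤ (entH P A + (L.card : ℝ) * (C3 - entH P A))
        + ((L.card - 1 : ℕ) : ℝ) * entH P A := by linarith
    _ = (L.card : ℝ) * C3 := by rw [hcast1]; ring
    _ = (L.card : ℝ) * ((R.card : ℝ) * α + β)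
        + (L.card : ℝ) * (((d - R.card : ℕ) : ℝ) * β - α) := by
        rw [hC3, hcast2, hcast3, hcast4]; ring
end

section
/- Let (M, (W_j), (S_i^j)) be an exact-repair regenerating code with parameters (n,k,d) and secondary parameters (B,α,β), where n ≥ d+1. Let {1,…,d+1} = T ∪ L ∪ M' ∪ U be a partition into four (possibly empty) subsets and let i ∈ L. Then H(W_i | W_T, W_{L∖{i}}, S_{M'}^i) ≤ H(S_U^i) ≤ |U|·β, where S_{M'}^i = (S_m^i : m ∈ M') and S_U^i = (S_u^i : u ∈ U). -/
open Finset

/-!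
Put `I = {1,…,d+1} ∖ {i}`, a set of `d` helpers, so `S_I^i` repairs `W_i`. Every `S_j^i` with
`j ∈ I` is determined by `S_U^i` together with `C = (W_T, W_{L∖{i}}, S_{M'}^i)`: directly for
`j ∈ M' ∪ U`, and through `W_j` for `j ∈ T ∪ L ∖ {i}`. Hence `(S_U^i, C)` determines `W_i`, and
`H(W_i | C) ≤ H(S_U^i, C) - H(C) ≤ H(S_U^i) ≤ ∑_{u ∈ U} H(S_u^i) = |U| β`.

A vanishing conditional entropy `H(X | Y) = 0` is used in the form "`X` is a function of `Y` on
the support of `P`", which makes the chain of dependencies purely set-theoretic; the only genuine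
entropy inequalities needed are monotonicity and subadditivity, both from Gibbs' inequality.
-/

noncomputable def fiberMass {Ω S : Type*} [Fintype Ω] (P : Ω → ℝ) (X : Ω → S) (s : S) : ℝ :=
  letI := Classical.decEq S
  ∑ ω ∈ univ.filter (fun ω => X ω = s), P ω

section fiberMass

variable {Ω S : Type*} [Fintype Ω] {P : Ω → ℝ} {X : Ω → S}

lemma fiberMass_eq_sum [DecidableEq S] (s : S) :
    fiberMass P X s = ∑ ω ∈ univ.filter (fun ω => X ω = s), P ω := by
  unfold fiberMass
  congr 1
  exact filter_congr_decidable _ _ _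

lemma le_fiberMass (hP : ∀ ω, 0 ≤ P ω) (ω : Ω) : P ω ≤ fiberMass P X (X ω) := by
  classical
  rw [fiberMass_eq_sum]
  exact single_le_sum (fun ω _ => hP ω) (by simp)

lemma fiberMass_nonneg (hP : ∀ ω, 0 ≤ P ω) (s : S) : 0 ≤ fiberMass P X s := by
  classical
  rw [fiberMass_eq_sum]
  exact sum_nonneg fun ω _ => hP ω

lemma sum_mul_comp_eq_sum_fiberMass [DecidableEq S] (g : S → ℝ) :
    ∑ ω, P ω * g (X ω) = ∑ s ∈ univ.image X, fiberMass P X s * g s := by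
  rw [← sum_fiberwise_of_maps_to (g := X) (t := univ.image X)
    fun ω _ => mem_image_of_mem X (mem_univ ω)]
  refine sum_congr rfl fun s _ => ?_
  rw [fiberMass_eq_sum, sum_mul]
  exact sum_congr rfl fun ω hω => by rw [(mem_filter.1 hω).2]

lemma sum_fiberMass_image [DecidableEq S] :
    ∑ s ∈ univ.image X, fiberMass P X s = ∑ ω, P ω := by
  simpa using (sum_mul_comp_eq_sum_fiberMass (P := P) (X := X) fun _ => 1).symm

lemma entH_eq_neg_sum : entH P X = -∑ ω, P ω * Real.logb 2 (fiberMass P X (X ω)) := by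
  classical
  rw [sum_mul_comp_eq_sum_fiberMass (X := X) fun s => Real.logb 2 (fiberMass P X s), entH,
    ← sum_neg_distrib]
  rfl

end fiberMass

section gibbs

variable {Ω S : Type*} [Fintype Ω] {P : Ω → ℝ} {X : Ω → S}

lemma mul_logb_le_mul_logb_add (p a b : ℝ) (hp : 0 ≤ p) (ha : 0 < p → 0 < a)
    (hb : 0 < p → 0 < b) :
    p * Real.logb 2 b ≤ p * Real.logb 2 a + (p * (b / a) - p) / Real.log 2 := by
  rcases hp.eq_or_lt with rfl | hp
  · simp
  have hlog : Real.log b - Real.log a ≤ b / a - 1 := by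
    rw [← Real.log_div (hb hp).ne' (ha hp).ne']
    exact Real.log_le_sub_one_of_pos (div_pos (hb hp) (ha hp))
  simp only [Real.logb]
  rw [← sub_nonneg]
  have key : 0 ≤ p * ((b / a - 1) - (Real.log b - Real.log a)) :=
    mul_nonneg hp.le (by linarith)
  have : p * (Real.log a / Real.log 2) + (p * (b / a) - p) / Real.log 2
      - p * (Real.log b / Real.log 2)
      = p * ((b / a - 1) - (Real.log b - Real.log a)) / Real.log 2 := by ring
  rw [this]
  exact div_nonneg key (Real.log_pos one_lt_two).le

/-- Gibbs' inequality, with `q` a sub-probability on the range of `X`. -/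
lemma entH_le_neg_sum_mul_logb [DecidableEq S] (hP : ∀ ω, 0 ≤ P ω) {q : S → ℝ}
    (hq : ∀ s, 0 ≤ q s) (hq_pos : ∀ ω, 0 < P ω → 0 < q (X ω))
    (hq_sum : ∑ s ∈ univ.image X, q s ≤ ∑ ω, P ω) :
    entH P X ≤ -∑ ω, P ω * Real.logb 2 (q (X ω)) := by
  have hratio : ∑ ω, P ω * (q (X ω) / fiberMass P X (X ω)) ≤ ∑ ω, P ω := by
    rw [sum_mul_comp_eq_sum_fiberMass (X := X) fun s => q s / fiberMass P X s]
    refine (sum_le_sum fun s _ => ?_).trans hq_sum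
    rcases eq_or_ne (fiberMass P X s) 0 with h0 | h0
    · rw [h0, zero_mul]
      exact hq s
    · rw [mul_div_cancel₀ _ h0]
  have htermwise := sum_le_sum fun ω (_ : ω ∈ univ) =>
    mul_logb_le_mul_logb_add (P ω) (fiberMass P X (X ω)) (q (X ω)) (hP ω)
      (fun h => h.trans_le (le_fiberMass hP ω)) (hq_pos ω)
  rw [sum_add_distrib, ← sum_div, sum_sub_distrib] at htermwise
  have : (∑ ω, P ω * (q (X ω) / fiberMass P X (X ω)) - ∑ ω, P ω) / Real.log 2 ≤ 0 :=
    div_nonpos_of_nonpos_of_nonneg (by linarith) (Real.log_pos one_lt_two).le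
  rw [entH_eq_neg_sum]
  linarith

end gibbs

section subadditivity

variable {Ω S T : Type*} [Fintype Ω] {P : Ω → ℝ}

lemma entH_prod_le_add (hP : ∀ ω, 0 ≤ P ω) (hP1 : ∑ ω, P ω = 1) (X : Ω → S) (Y : Ω → T) :
    entH P (fun ω => (X ω, Y ω)) ≤ entH P X + entH P Y := by
  classical
  have hsum : ∑ p ∈ univ.image (fun ω => (X ω, Y ω)), fiberMass P X p.1 * fiberMass P Y p.2
      ≤ ∑ ω, P ω := by
    calc _ ≤ ∑ p ∈ univ.image X ×ˢ univ.image Y, fiberMass P X p.1 * fiberMass P Y p.2 := by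
          refine sum_le_sum_of_subset_of_nonneg (fun p hp => ?_) fun p _ _ =>
            mul_nonneg (fiberMass_nonneg hP _) (fiberMass_nonneg hP _)
          obtain ⟨ω, -, rfl⟩ := mem_image.1 hp
          exact mem_product.2 ⟨mem_image_of_mem X (mem_univ ω), mem_image_of_mem Y (mem_univ ω)⟩
      _ = ∑ ω, P ω := by
          rw [sum_product, ← sum_mul_sum, sum_fiberMass_image, sum_fiberMass_image, hP1, one_mul]
  have hgibbs := entH_le_neg_sum_mul_logb (X := fun ω => (X ω, Y ω)) hP
    (fun p => mul_nonneg (fiberMass_nonneg hP p.1) (fiberMass_nonneg hP p.2))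
    (fun ω h => mul_pos (h.trans_le (le_fiberMass hP ω)) (h.trans_le (le_fiberMass hP ω))) hsum
  have hsplit : ∀ ω, P ω * Real.logb 2 (fiberMass P X (X ω) * fiberMass P Y (Y ω))
      = P ω * Real.logb 2 (fiberMass P X (X ω))
        + P ω * Real.logb 2 (fiberMass P Y (Y ω)) := by
    intro ω
    rcases (hP ω).eq_or_lt with h | h
    · simp [← h]
    · rw [Real.logb_mul (h.trans_le (le_fiberMass hP ω)).ne'
        (h.trans_le (le_fiberMass hP ω)).ne', mul_add]
  rw [entH_eq_neg_sum (X := X), entH_eq_neg_sum (X := Y), ← neg_add, ← sum_add_distrib]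
  simpa only [hsplit] using hgibbs

lemma entH_pi_le_sum {ι : Type*} [Fintype ι] {κ : ι → Type*} (hP : ∀ ω, 0 ≤ P ω)
    (hP1 : ∑ ω, P ω = 1) (X : ∀ j, Ω → κ j) :
    entH P (fun ω j => X j ω) ≤ ∑ j, entH P (X j) := by
  classical
  have hsum : ∑ v ∈ univ.image (fun ω j => X j ω), ∏ j, fiberMass P (X j) (v j)
      ≤ ∑ ω, P ω := by
    calc _ ≤ ∑ v ∈ Fintype.piFinset fun j => univ.image (X j),
            ∏ j, fiberMass P (X j) (v j) := by
          refine sum_le_sum_of_subset_of_nonneg (fun v hv => ?_) fun v _ _ =>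
            prod_nonneg fun j _ => fiberMass_nonneg hP _
          obtain ⟨ω, -, rfl⟩ := mem_image.1 hv
          exact Fintype.mem_piFinset.2 fun j => mem_image_of_mem (X j) (mem_univ ω)
      _ = ∑ ω, P ω := by simp only [← prod_univ_sum, sum_fiberMass_image, hP1, prod_const_one]
  have hgibbs := entH_le_neg_sum_mul_logb (X := fun ω j => X j ω) hP
    (fun v => prod_nonneg fun j _ => fiberMass_nonneg hP (v j))
    (fun ω h => prod_pos fun j _ => h.trans_le (le_fiberMass hP ω)) hsum
  have hsplit : ∀ ω, P ω * Real.logb 2 (∏ j, fiberMass P (X j) (X j ω))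
      = ∑ j, P ω * Real.logb 2 (fiberMass P (X j) (X j ω)) := by
    intro ω
    rcases (hP ω).eq_or_lt with h | h
    · simp [← h]
    · rw [Real.logb_prod _ _ fun j _ => (h.trans_le (le_fiberMass hP ω)).ne', mul_sum]
  simp only [entH_eq_neg_sum (X := X _), sum_neg_distrib]
  rw [sum_comm, ← sum_neg_distrib]
  simpa only [hsplit, sum_neg_distrib] using hgibbs

end subadditivity

def Determines {Ω S T : Type*} (P : Ω → ℝ) (Y : Ω → T) (X : Ω → S) : Prop :=
  ∀ ω ω', 0 < P ω → 0 < P ω' → Y ω = Y ω' → X ω = X ω'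

section determines

variable {Ω S T U : Type*} {P : Ω → ℝ} {X : Ω → S} {Y : Ω → T} {Z : Ω → U}

lemma Determines.of_eq_comp (f : T → S) (h : ∀ ω, X ω = f (Y ω)) : Determines P Y X :=
  fun ω ω' _ _ hY => by rw [h, h, hY]

lemma Determines.trans (hXY : Determines P Y X) (hYZ : Determines P Z Y) : Determines P Z X :=
  fun ω ω' hω hω' h => hXY ω ω' hω hω' (hYZ ω ω' hω hω' h)

lemma Determines.prodMk (hX : Determines P Z X) (hY : Determines P Z Y) :
    Determines P Z (fun ω => (X ω, Y ω)) :=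
  fun ω ω' hω hω' h => Prod.ext (hX ω ω' hω hω' h) (hY ω ω' hω hω' h)

lemma Determines.pi {ι : Type*} {κ : ι → Type*} {X : ∀ j, Ω → κ j}
    (h : ∀ j, Determines P Z (X j)) : Determines P Z (fun ω j => X j ω) :=
  fun ω ω' hω hω' hZ => funext fun j => h j ω ω' hω hω' hZ

variable [Fintype Ω]

lemma fiberMass_le_of_determines (hP : ∀ ω, 0 ≤ P ω) (h : Determines P Y X) {ω : Ω}
    (hω : 0 < P ω) : fiberMass P Y (Y ω) ≤ fiberMass P X (X ω) := by
  classical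
  rw [fiberMass_eq_sum, fiberMass_eq_sum, ← sum_filter_ne_zero]
  refine sum_le_sum_of_subset_of_nonneg (fun ω' hω' => ?_) fun ω' _ _ => hP ω'
  simp only [mem_filter, mem_univ, true_and] at hω' ⊢
  exact h ω' ω ((hP ω').lt_of_ne' hω'.2) hω hω'.1

lemma entH_le_of_determines (hP : ∀ ω, 0 ≤ P ω) (h : Determines P Y X) :
    entH P X ≤ entH P Y := by
  rw [entH_eq_neg_sum, entH_eq_neg_sum, neg_le_neg_iff]
  refine sum_le_sum fun ω _ => ?_
  rcases (hP ω).eq_or_lt with hω | hω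
  · simp [← hω]
  · exact mul_le_mul_of_nonneg_left (Real.logb_le_logb_of_le one_lt_two
      (hω.trans_le (le_fiberMass hP ω)) (fiberMass_le_of_determines hP h hω)) hω.le

lemma condH_eq_sum_mul_sub (X : Ω → S) (Y : Ω → T) :
    condH P X Y = ∑ ω, P ω * (Real.logb 2 (fiberMass P Y (Y ω))
      - Real.logb 2 (fiberMass P (fun ω => (X ω, Y ω)) (X ω, Y ω))) := by
  rw [condH, entH_eq_neg_sum, entH_eq_neg_sum]
  simp only [mul_sub, sum_sub_distrib]
  ring

lemma fiberMass_prod_eq_of_condH_eq_zero (hP : ∀ ω, 0 ≤ P ω) (h : condH P X Y = 0) {ω : Ω}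
    (hω : 0 < P ω) : fiberMass P (fun ω => (X ω, Y ω)) (X ω, Y ω) = fiberMass P Y (Y ω) := by
  have hterm_nonneg : ∀ ω, 0 ≤ P ω * (Real.logb 2 (fiberMass P Y (Y ω))
      - Real.logb 2 (fiberMass P (fun ω => (X ω, Y ω)) (X ω, Y ω))) := by
    intro ω
    rcases (hP ω).eq_or_lt with hω | hω
    · simp [← hω]
    · exact mul_nonneg hω.le (sub_nonneg.2 (Real.logb_le_logb_of_le one_lt_two
        (hω.trans_le (le_fiberMass hP ω))
        (fiberMass_le_of_determines hP (.of_eq_comp Prod.snd fun _ => rfl) hω)))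
  rw [condH_eq_sum_mul_sub] at h
  have hterm := (sum_eq_zero_iff_of_nonneg fun ω _ => hterm_nonneg ω).1 h ω (mem_univ ω)
  refine Real.logb_injOn_pos one_lt_two (hω.trans_le (le_fiberMass hP ω))
    (hω.trans_le (le_fiberMass hP ω)) ?_
  linarith [(mul_eq_zero.1 hterm).resolve_left hω.ne']

lemma Determines.of_condH_eq_zero (hP : ∀ ω, 0 ≤ P ω) (h : condH P X Y = 0) :
    Determines P Y X := by
  classical
  intro ω ω' hω hω' hY
  by_contra hX
  set XY := fun ω => (X ω, Y ω)
  -- otherwise `ω'` would add positive mass to the fiber of `Y` outside the fiber of `(X, Y)`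
  have hsub : insert ω' (univ.filter fun ω'' => XY ω'' = XY ω)
      ⊆ univ.filter fun ω'' => Y ω'' = Y ω := by
    intro ω'' h''
    rcases mem_insert.1 h'' with rfl | h''
    · simpa using hY.symm
    · simp only [XY, mem_filter, mem_univ, true_and, Prod.mk.injEq] at h'' ⊢
      exact h''.2
  have hnotin : ω' ∉ univ.filter fun ω'' => XY ω'' = XY ω := by
    simp only [XY, mem_filter, mem_univ, true_and, Prod.mk.injEq, not_and]
    exact fun h _ => hX h.symm
  have hmass := sum_le_sum_of_subset_of_nonneg hsub fun ω'' _ _ => hP ω''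
  rw [sum_insert hnotin, ← fiberMass_eq_sum, ← fiberMass_eq_sum (X := Y),
    fiberMass_prod_eq_of_condH_eq_zero hP h hω] at hmass
  linarith

end determines

lemma condH_le_entH_of_determines {Ω S T U : Type*} [Fintype Ω] {P : Ω → ℝ}
    (hP : ∀ ω, 0 ≤ P ω) (hP1 : ∑ ω, P ω = 1) {X : Ω → S} {Y : Ω → T} {C : Ω → U}
    (h : Determines P (fun ω => (Y ω, C ω)) X) : condH P X C ≤ entH P Y := by
  have hXC : entH P (fun ω => (X ω, C ω)) ≤ entH P (fun ω => (Y ω, C ω)) :=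
    entH_le_of_determines hP (h.prodMk (.of_eq_comp Prod.snd fun _ => rfl))
  rw [condH]
  linarith [entH_prod_le_add hP hP1 Y C]

namespace IsRegenCode

variable {Ω : Type*} [Fintype Ω] {n k d : ℕ} {B α β : ℝ} {P : Ω → ℝ}
  {σM : Type*} {σW : Fin n → Type*} {σS : Fin n → Fin n → Type*}
  {M : Ω → σM} {W : ∀ j, Ω → σW j} {S : ∀ i j, Ω → σS i j}

lemma determines_of_partition (hcode : IsRegenCode n k d B α β P M W S)
    {T L M' U : Finset (Fin n)}
    (hunion : T ∪ L ∪ M' ∪ U = univ.filter fun x : Fin n => (x : ℕ) < d + 1)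
    {i : Fin n} (hi : i ∈ L) :
    Determines P
      (fun ω => (jointSto S U i ω, jointW W T ω, jointW W (L.erase i) ω, jointSto S M' i ω))
      (W i) := by
  set D := univ.filter fun x : Fin n => (x : ℕ) < d + 1
  have hiD : i ∈ D := hunion ▸ by simp [hi]
  have hcard : d ≤ (D.erase i).card := by
    rw [card_erase_of_mem hiD, Fin.card_filter_val_lt, min_eq_right hcode.hdn,
      Nat.add_sub_cancel]
  have hrepair := Determines.of_condH_eq_zero hcode.prob_nonneg
    (hcode.hWS i (D.erase i) hcard (notMem_erase i D))
  refine hrepair.trans (Determines.pi (X := fun j : D.erase i => S j.1 i) fun ⟨j, hj⟩ => ?_)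
  obtain ⟨hji, hjD⟩ := mem_erase.1 hj
  have hSj := Determines.of_condH_eq_zero hcode.prob_nonneg (hcode.hSW j i hji)
  rw [← hunion] at hjD
  rcases mem_union.1 hjD with hjTLM | hjU
  · rcases mem_union.1 hjTLM with hjTL | hjM
    · rcases mem_union.1 hjTL with hjT | hjL
      · exact hSj.trans (.of_eq_comp (fun z => z.2.1 ⟨j, hjT⟩) fun _ => rfl)
      · exact hSj.trans
          (.of_eq_comp (fun z => z.2.2.1 ⟨j, mem_erase.2 ⟨hji, hjL⟩⟩) fun _ => rfl)
    · exact .of_eq_comp (fun z => z.2.2.2 ⟨j, hjM⟩) fun _ => rfl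
  · exact .of_eq_comp (fun z => z.1 ⟨j, hjU⟩) fun _ => rfl

lemma entH_jointSto_le (hcode : IsRegenCode n k d B α β P M W S) {U : Finset (Fin n)}
    {i : Fin n} (hiU : i ∉ U) : entH P (jointSto S U i) ≤ U.card * β :=
  calc entH P (jointSto S U i) ≤ ∑ u : U, entH P (S u i) :=
        entH_pi_le_sum hcode.prob_nonneg hcode.prob_sum _
    _ = ∑ _u : U, β := sum_congr rfl fun u _ => hcode.hSβ u i fun h => hiU (h ▸ u.2)
    _ = U.card * β := by simp

end IsRegenCode

theorem stmt_18_general {Ω : Type*} [Fintype Ω] {n k d : ℕ} {B α β : ℝ} {P : Ω → ℝ}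
    {σM : Type*} {σW : Fin n → Type*} {σS : Fin n → Fin n → Type*}
    {M : Ω → σM} {W : ∀ j, Ω → σW j} {S : ∀ i j, Ω → σS i j}
    (hcode : IsRegenCode n k d B α β P M W S)
    (T L M' U : Finset (Fin n))
    (hd5 : Disjoint L U)
    (hunion : T ∪ L ∪ M' ∪ U = Finset.univ.filter (fun x : Fin n => (x : ℕ) < d + 1))
    (i : Fin n) (hi : i ∈ L) :
    condH P (W i) (fun ω =>
        (jointW W T ω, jointW W (L.erase i) ω, jointSto S M' i ω))
      ≤ entH P (jointSto S U i)
    ∧ entH P (jointSto S U i) ≤ (U.card : ℝ) * β :=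
  ⟨condH_le_entH_of_determines hcode.prob_nonneg hcode.prob_sum
      (hcode.determines_of_partition hunion hi),
    hcode.entH_jointSto_le (disjoint_left.1 hd5 hi)⟩

/-- for a partition `{1,…,d+1} = T ∪ L ∪ M' ∪ U` and `i ∈ L`,
`H(W_i | W_T, W_{L∖{i}}, S_{M'}^i) ≤ H(S_U^i) ≤ |U|·β`. -/
theorem stmt_18 {Ω : Type*} [Fintype Ω] {n k d : ℕ} {B α β : ℝ} {P : Ω → ℝ}
    {σM : Type*} {σW : Fin n → Type*} {σS : Fin n → Fin n → Type*}
    {M : Ω → σM} {W : ∀ j, Ω → σW j} {S : ∀ i j, Ω → σS i j}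
    (hcode : IsRegenCode n k d B α β P M W S)
    (T L M' U : Finset (Fin n))
    (hd1 : Disjoint T L) (hd2 : Disjoint T M') (hd3 : Disjoint T U)
    (hd4 : Disjoint L M') (hd5 : Disjoint L U) (hd6 : Disjoint M' U)
    (hunion : T ∪ L ∪ M' ∪ U = Finset.univ.filter (fun x : Fin n => (x : ℕ) < d + 1))
    (i : Fin n) (hi : i ∈ L) :
    condH P (W i) (fun ω =>
        (jointW W T ω, jointW W (L.erase i) ω, jointSto S M' i ω))
      ≤ entH P (jointSto S U i)
    ∧ entH P (jointSto S U i) ≤ (U.card : ℝ) * β :=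
  stmt_18_general hcode T L M' U hd5 hunion i hi
end

section
/- For every integer d ≥ 3 there exists an exact-repair regenerating code with parameters (n,k,d) = (d+1, d, d) and secondary parameters (B, α, β) = (d² − 1, d, d − 1), where Shannon entropy is taken in bits (base 2). In particular, for this code B equals B_{k−1} and is strictly smaller than both B_k and B_{k−2}. -/
open Finset

/-!
Take an `(d+1) × (d+1)` binary array with zero diagonal and even column sums, and let node `j`
store row `j` off the diagonal. Such arrays form a space of `(d+1)(d-1) = d² - 1` bits, and
every row is uniformly distributed, so `α = d` and `β = d - 1`. Each entry `(j, m)` is the sum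
of the other entries of column `m`, which sit in rows `i ≠ j, m` and columns `m ≠ i, j`: they
are exactly what the helpers `S_i^j` send, so node `j` is repaired, and any `d` rows determine
the missing one.
-/

noncomputable def uniformMass (Ω : Type*) [Fintype Ω] : Ω → ℝ :=
  fun _ => (Fintype.card Ω : ℝ)⁻¹

lemma logb_two_two_pow (k : ℕ) : Real.logb 2 (2 ^ k) = k := by
  rw [Real.logb_pow, Real.logb_self_eq_one one_lt_two, mul_one]

lemma condH_eq_zero_of_determined {Ω S T : Type*} [Fintype Ω] (P : Ω → ℝ) (X : Ω → S)
    (Y : Ω → T) (h : ∀ ω ω', Y ω = Y ω' → X ω = X ω') : condH P X Y = 0 := by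
  let := Classical.decEq S
  let := Classical.decEq T
  let : DecidableEq (S × T) := Classical.decEq _
  set Z : Ω → S × T := fun ω => (X ω, Y ω)
  have hinj : Set.InjOn Prod.snd (univ.image Z : Set (S × T)) := by
    simp only [coe_image, coe_univ, Set.image_univ]
    rintro _ ⟨ω, rfl⟩ _ ⟨ω', rfl⟩ hY
    exact Prod.ext (h ω ω' hY) hY
  have hfiber : ∀ z ∈ univ.image Z,
      univ.filter (fun ω => Z ω = z) = univ.filter (fun ω => Y ω = z.2) := by
    intro z hz
    obtain ⟨ω₀, -, rfl⟩ := mem_image.1 hz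
    ext ω
    simp only [mem_filter, mem_univ, true_and]
    exact ⟨congrArg Prod.snd, fun hY => Prod.ext (h ω ω₀ hY) hY⟩
  rw [condH, sub_eq_zero]
  show ∑ z ∈ univ.image Z, _ = ∑ t ∈ univ.image Y, _
  rw [← show (univ.image Z).image Prod.snd = univ.image Y from image_image, sum_image hinj]
  exact sum_congr rfl fun z hz => by rw [hfiber z hz]

lemma entH_uniformMass_of_surjective {G S : Type*} [AddGroup G] [Fintype G] [AddGroup S]
    [Fintype S] (X : G → S) (hX : ∀ a b, X (a + b) = X a + X b)
    (hsurj : Function.Surjective X) :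
    entH (uniformMass G) X = Real.logb 2 (Fintype.card S) := by
  let := Classical.decEq S
  set c := #(univ.filter (fun ω => X ω = 0))
  have hfiber : ∀ s, #(univ.filter (fun ω => X ω = s)) = c := fun s =>
    AddMonoidHom.card_fiber_eq_of_mem_range (AddMonoidHom.mk' X hX) (hsurj s) (hsurj 0)
  have hcard : Fintype.card G = Fintype.card S * c := by
    rw [← card_univ, card_eq_sum_card_fiberwise (fun ω _ => mem_univ (X ω)),
      sum_congr rfl fun s _ => hfiber s, sum_const, card_univ, smul_eq_mul]
  have hc : c ≠ 0 := by
    obtain ⟨ω, hω⟩ := hsurj 0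
    exact (card_pos.2 ⟨ω, mem_filter.2 ⟨mem_univ ω, hω⟩⟩).ne'
  have hS : (Fintype.card S : ℝ) ≠ 0 := Nat.cast_ne_zero.2 Fintype.card_ne_zero
  have hmass : ∀ s, ∑ ω ∈ univ.filter (fun ω => X ω = s), uniformMass G ω
      = (Fintype.card S : ℝ)⁻¹ := by
    intro s
    simp only [uniformMass, sum_const, hfiber s, nsmul_eq_mul, hcard, Nat.cast_mul]
    field_simp
  show ∑ s ∈ univ.image X, _ = _
  rw [image_univ_of_surjective hsurj]
  simp only [hmass, Real.logb_inv, sum_const, card_univ, nsmul_eq_mul]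
  field_simp

lemma Finset.mem_of_ne_of_notMem_of_card_le_succ {α : Type*} [Fintype α] {s : Finset α}
    (hs : Fintype.card α ≤ #s + 1) {a b : α} (ha : a ∉ s) (hb : b ≠ a) : b ∈ s := by
  classical
  have : s = univ.erase a :=
    eq_of_subset_of_card_le (fun x hx => mem_erase.2 ⟨ne_of_mem_of_not_mem hx ha, mem_univ x⟩)
      (by rw [card_erase_of_mem (mem_univ a), card_univ]; omega)
  exact this ▸ mem_erase.2 ⟨hb, mem_univ b⟩

lemma Finset.eq_of_sum_eq_of_eq_of_ne {ι G : Type*} [AddCommGroup G] (s : Finset ι) {f g : ι → G}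
    {t : ι} (ht : t ∈ s) (hsum : ∑ i ∈ s, f i = ∑ i ∈ s, g i)
    (h : ∀ i ∈ s, i ≠ t → f i = g i) : f t = g t := by
  classical
  rw [← add_sum_erase s f ht, ← add_sum_erase s g ht,
    sum_congr rfl fun i hi => h i (mem_of_mem_erase hi) (ne_of_mem_erase hi)] at hsum
  exact add_right_cancel hsum

lemma Fintype.card_subtype_ne_and_ne {α : Type*} [Fintype α] [DecidableEq α] {a b : α}
    (hab : a ≠ b) : Fintype.card {x : α // x ≠ a ∧ x ≠ b} = Fintype.card α - 2 := by
  rw [Fintype.card_subtype, ← card_pair hab, ← card_compl]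
  congr 1
  ext x
  simp

lemma Fin.add_one_ne_self {n : ℕ} [NeZero n] (hn : 2 ≤ n) (m : Fin n) : m + 1 ≠ m := by
  rw [Ne, add_eq_left, Fin.ext_iff, Fin.val_zero, Fin.val_one', Nat.mod_eq_of_lt (by omega)]
  exact one_ne_zero

abbrev FreeBits (n : ℕ) [NeZero n] : Type :=
  ∀ m : Fin n, {i : Fin n // i ≠ m ∧ i ≠ m + 1} → ZMod 2

section Codeword

variable {n : ℕ} [NeZero n]

/-- Column `m` carries the free bits `ω m` in the rows other than `m` and `m + 1`, a zero on the
diagonal, and the parity of `ω m` in row `m + 1`. -/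
def codeword (ω : FreeBits n) (i m : Fin n) : ZMod 2 :=
  if h : i ≠ m ∧ i ≠ m + 1 then ω m ⟨i, h⟩ else if i = m + 1 then ∑ x, ω m x else 0

lemma codeword_of_ne (ω : FreeBits n) {i m : Fin n} (h : i ≠ m ∧ i ≠ m + 1) :
    codeword ω i m = ω m ⟨i, h⟩ :=
  dif_pos h

lemma codeword_add_one (ω : FreeBits n) (m : Fin n) : codeword ω (m + 1) m = ∑ x, ω m x := by
  rw [codeword, dif_neg (by simp), if_pos rfl]

lemma codeword_self (hn : 2 ≤ n) (ω : FreeBits n) (m : Fin n) : codeword ω m m = 0 := by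
  rw [codeword, dif_neg (by simp), if_neg (Fin.add_one_ne_self hn m).symm]

lemma codeword_add (ω ω' : FreeBits n) (i m : Fin n) :
    codeword (ω + ω') i m = codeword ω i m + codeword ω' i m := by
  unfold codeword
  split_ifs <;> simp [sum_add_distrib]

lemma sum_codeword (hn : 2 ≤ n) (ω : FreeBits n) (m : Fin n) : ∑ i, codeword ω i m = 0 := by
  classical
  have hfree : ∑ i ∈ (univ.erase (m + 1)).erase m, codeword ω i m = ∑ x, ω m x := by
    rw [sum_subtype _ (p := fun i => i ≠ m ∧ i ≠ m + 1) fun i => by simp [and_comm]]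
    exact sum_congr rfl fun x _ => codeword_of_ne ω x.2
  rw [← add_sum_erase _ _ (mem_univ (m + 1)),
    ← add_sum_erase _ _ (mem_erase.2 ⟨(Fin.add_one_ne_self hn m).symm, mem_univ m⟩),
    codeword_add_one, codeword_self hn, hfree, zero_add, CharTwo.add_self_eq_zero]

lemma codeword_eq_of_eq_of_ne (hn : 2 ≤ n) {ω ω' : FreeBits n} {t m : Fin n}
    (h : ∀ i, i ≠ t → i ≠ m → codeword ω i m = codeword ω' i m) :
    codeword ω t m = codeword ω' t m := by
  refine eq_of_sum_eq_of_eq_of_ne (f := fun i => codeword ω i m) univ (mem_univ t)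
    ((sum_codeword hn ω m).trans (sum_codeword hn ω' m).symm) fun i _ hit => ?_
  by_cases him : i = m
  · rw [him, codeword_self hn, codeword_self hn]
  · exact h i hit him

lemma exists_codeword_row (hn : 3 ≤ n) (r : Fin n) (w : Fin n → ZMod 2) :
    ∃ ω : FreeBits n, ∀ m, m ≠ r → codeword ω r m = w m := by
  -- When `r` is the parity row `m + 1` of column `m`, the bit goes into a third row `c m`.
  choose c hc using fun m : Fin n =>
    ENat.exists_ne_ne_of_three_le (by simpa using hn) m (m + 1)
  let p : Fin n → Fin n := fun m => if r = m + 1 then c m else r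
  refine ⟨fun m x => if x.1 = p m then w m else 0, fun m hmr => ?_⟩
  by_cases hr : r = m + 1
  · rw [hr, codeword_add_one, Fintype.sum_eq_single ⟨c m, hc m⟩]
    · simp [p, hr]
    · intro x hx
      have hxc : x.1 ≠ c m := fun h => hx (Subtype.ext h)
      simp [p, hr, hxc]
  · rw [codeword_of_ne _ ⟨hmr.symm, hr⟩]
    simp [p, hr]

lemma card_freeBits (hn : 2 ≤ n) : Fintype.card (FreeBits n) = 2 ^ (n * (n - 2)) := by
  simp only [Fintype.card_pi, ZMod.card,
    Fintype.card_subtype_ne_and_ne (Fin.add_one_ne_self hn _).symm, Fintype.card_fin,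
    prod_const, card_univ, ← pow_mul, mul_comm]

lemma eq_of_codeword_eq_of_card_le (hn : 2 ≤ n) {ω ω' : FreeBits n} {J : Finset (Fin n)}
    (hJ : n ≤ #J + 1) (h : ∀ t ∈ J, ∀ m, m ≠ t → codeword ω t m = codeword ω' t m) :
    ω = ω' := by
  funext m x
  rw [← codeword_of_ne ω x.2, ← codeword_of_ne ω' x.2]
  by_cases hx : x.1 ∈ J
  · exact h x hx m x.2.1.symm
  · refine codeword_eq_of_eq_of_ne hn fun i hix him => h i ?_ m (Ne.symm him)
    exact mem_of_ne_of_notMem_of_card_le_succ (by simpa using hJ) hx hix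

lemma codeword_eq_of_card_le (hn : 2 ≤ n) {ω ω' : FreeBits n} {I : Finset (Fin n)} {j : Fin n}
    (hI : n ≤ #I + 1) (hjI : j ∉ I)
    (h : ∀ i ∈ I, ∀ m, m ≠ i → m ≠ j → codeword ω i m = codeword ω' i m) (m : Fin n)
    (hmj : m ≠ j) : codeword ω j m = codeword ω' j m :=
  codeword_eq_of_eq_of_ne hn fun i hij him =>
    h i (mem_of_ne_of_notMem_of_card_le_succ (by simpa using hI) hjI hij) m (Ne.symm him) hmj

def storedRow (j : Fin n) (ω : FreeBits n) : {m : Fin n // m ≠ j} → ZMod 2 :=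
  fun m => codeword ω j m

def repairMessage (i j : Fin n) (ω : FreeBits n) : {m : Fin n // m ≠ i ∧ m ≠ j} → ZMod 2 :=
  fun m => codeword ω i m

lemma storedRow_add (j : Fin n) (ω ω' : FreeBits n) :
    storedRow j (ω + ω') = storedRow j ω + storedRow j ω' :=
  funext fun m => codeword_add ω ω' j m

lemma repairMessage_add (i j : Fin n) (ω ω' : FreeBits n) :
    repairMessage i j (ω + ω') = repairMessage i j ω + repairMessage i j ω' :=
  funext fun m => codeword_add ω ω' i m

lemma storedRow_surjective (hn : 3 ≤ n) (j : Fin n) : Function.Surjective (storedRow j) := by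
  intro w
  obtain ⟨ω, hω⟩ := exists_codeword_row hn j fun m => if h : m = j then 0 else w ⟨m, h⟩
  exact ⟨ω, funext fun m => (hω m m.2).trans (dif_neg m.2)⟩

lemma repairMessage_surjective (hn : 3 ≤ n) (i j : Fin n) :
    Function.Surjective (repairMessage i j) := by
  intro w
  obtain ⟨ω, hω⟩ :=
    exists_codeword_row hn i fun m => if h : m ≠ i ∧ m ≠ j then w ⟨m, h⟩ else 0
  exact ⟨ω, funext fun m => (hω m m.2.1).trans (dif_pos m.2)⟩

end Codeword

theorem isRegenCode_codeword (d : ℕ) (hd : 2 ≤ d) :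
    IsRegenCode (d + 1) d d ((d : ℝ) ^ 2 - 1) d ((d : ℝ) - 1) (uniformMass (FreeBits (d + 1)))
      id storedRow repairMessage where
  prob_nonneg _ := inv_nonneg.2 (Nat.cast_nonneg _)
  prob_sum := by
    simp only [uniformMass, sum_const, card_univ, nsmul_eq_mul]
    exact mul_inv_cancel₀ (Nat.cast_ne_zero.2 Fintype.card_ne_zero)
  hk := by omega
  hkd := le_rfl
  hdn := le_rfl
  hB := by
    have : (2 : ℝ) ≤ d := by exact_mod_cast hd
    nlinarith
  hα := d.cast_nonneg
  hβ := by
    have : (2 : ℝ) ≤ d := by exact_mod_cast hd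
    linarith
  hMB := by
    rw [entH_uniformMass_of_surjective id (fun _ _ => rfl) Function.surjective_id,
      card_freeBits (by omega), show d + 1 - 2 = d - 1 by omega, Nat.cast_pow, Nat.cast_ofNat,
      logb_two_two_pow]
    push_cast [Nat.cast_sub (by omega : 1 ≤ d)]
    ring
  hWα j := by
    rw [entH_uniformMass_of_surjective _ (storedRow_add j) (storedRow_surjective (by omega) j)]
    simp [logb_two_two_pow]
  hWM j := condH_eq_zero_of_determined _ _ _ fun _ _ h => congrArg (storedRow j) h
  hMW J hJ := condH_eq_zero_of_determined _ _ _ fun ω ω' h =>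
    eq_of_codeword_eq_of_card_le (by omega) (by omega) fun t ht m hm =>
      congrFun (congrFun h ⟨t, ht⟩) ⟨m, hm⟩
  hSβ i j hij := by
    rw [entH_uniformMass_of_surjective _ (repairMessage_add i j)
      (repairMessage_surjective (by omega) i j), Fintype.card_fun,
      Fintype.card_subtype_ne_and_ne hij, Fintype.card_fin, ZMod.card, Nat.cast_pow, Nat.cast_ofNat,
      logb_two_two_pow, show d + 1 - 2 = d - 1 by omega, Nat.cast_sub (by omega : 1 ≤ d)]
    simp
  hSW i j _ := condH_eq_zero_of_determined _ _ _ fun ω ω' h =>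
    funext fun m => congrFun h ⟨m, m.2.1⟩
  hWS j I hI hjI := condH_eq_zero_of_determined _ _ _ fun ω ω' h =>
    funext fun m => codeword_eq_of_card_le (by omega) (by omega) hjI
      (fun i hi m hmi hmj => congrFun (congrFun h ⟨i, hi⟩) ⟨m, hmi, hmj⟩) m m.2

/-- for every `d ≥ 3` there is an exact-repair regenerating code with
parameters `(d+1, d, d)` and secondary parameters `(B, α, β) = (d² - 1, d, d - 1)`
(entropy in bits, as in the definition of `entH`); moreover `B = B_{k-1}` and
`B < B_k`, `B < B_{k-2}`. -/
theorem stmt_19 (d : ℕ) (hd : 3 ≤ d) :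
    (∃ (Ω : Type) (inst : Fintype Ω) (P : Ω → ℝ)
       (σM : Type) (σW : Fin (d + 1) → Type) (σS : Fin (d + 1) → Fin (d + 1) → Type)
       (M : Ω → σM) (W : ∀ j, Ω → σW j) (S : ∀ i j, Ω → σS i j),
       @IsRegenCode Ω inst (d + 1) d d ((d : ℝ) ^ 2 - 1) (d : ℝ) ((d : ℝ) - 1)
         P σM σW σS M W S)
    ∧ (d : ℝ) ^ 2 - 1 = Bfun d d (d - 1) (d : ℝ) ((d : ℝ) - 1)
    ∧ (d : ℝ) ^ 2 - 1 < Bfun d d d (d : ℝ) ((d : ℝ) - 1)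
    ∧ (d : ℝ) ^ 2 - 1 < Bfun d d (d - 2) (d : ℝ) ((d : ℝ) - 1) := by
  refine ⟨⟨FreeBits (d + 1), inferInstance, _, _, _, _, id, storedRow, repairMessage,
    isRegenCode_codeword d (by omega)⟩, ?_⟩
  obtain ⟨e, rfl⟩ : ∃ e, d = e + 3 := ⟨d - 3, by omega⟩
  refine ⟨?_, ?_, ?_⟩ <;>
    simp [Bfun, show e + 3 - 1 = e + 2 by omega, show e + 3 - 2 = e + 1 by omega,
      show e + 3 - (e + 2) = 1 by omega, show e + 3 - (e + 1) = 2 by omega] <;>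
    nlinarith
end
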